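/- arXiv:2603.27128 — 8 statements merged into one kernel-verified Lean document; each statement's English description precedes it below -/
import Mathlib

section
/- Let A, Ã be real symmetric n×n matrices and let ε = max_{i,j} |A_{ij} − Ã_{ij}|. Then there exists a permutation σ of {1,…,n} such that the square root of the sum over i of |λ_i(A) − λ_{σ(i)}(Ã)|² is at most n·ε, where λ_i denotes the eigenvalues. -/
/-!
Diagonalize `A = U Λ Uᵀ` and `B = V M Vᵀ` with `U`, `V` orthogonal and put `W = Uᵀ V`. Then
`Uᵀ (A - B) V = Λ W - W M` has entries `(λᵢ - μⱼ) Wᵢⱼ`, so by orthogonal invariance of the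
Frobenius norm `‖A - B‖_F² = ∑ᵢⱼ Wᵢⱼ² (λᵢ - μⱼ)²`. The matrix `(Wᵢⱼ²)` is doubly stochastic, and
by Birkhoff's theorem a linear functional on doubly stochastic matrices is minimized at a
permutation matrix `σ`, which gives `∑ᵢ (λᵢ - μ_{σ i})² ≤ ‖A - B‖_F² ≤ (n ε)²`.
-/

open Finset

namespace Matrix

variable {ι : Type*} [Fintype ι]

theorem sum_sq_eq_trace_transpose_mul (M : Matrix ι ι ℝ) :
    ∑ i, ∑ j, M i j ^ 2 = trace (Mᵀ * M) := by
  rw [sum_comm]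
  simp [trace, mul_apply, sq]

theorem sqrt_sum_sq_le_card_mul_of_abs_le {M : Matrix ι ι ℝ} {ε : ℝ} (h : ∀ i j, |M i j| ≤ ε) :
    √(∑ i, ∑ j, M i j ^ 2) ≤ Fintype.card ι * ε := by
  rcases isEmpty_or_nonempty ι with hι | ⟨⟨i₀⟩⟩
  · simp
  have hsq : ∀ i j, M i j ^ 2 ≤ ε ^ 2 := fun i j => sq_le_sq.mpr ((h i j).trans (le_abs_self ε))
  have hε : 0 ≤ ε := (abs_nonneg _).trans (h i₀ i₀)
  calc √(∑ i, ∑ j, M i j ^ 2) ≤ √(∑ _i : ι, ∑ _j : ι, ε ^ 2) :=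
        Real.sqrt_le_sqrt (sum_le_sum fun i _ => sum_le_sum fun j _ => hsq i j)
    _ = Fintype.card ι * ε := by
        rw [sum_const, sum_const, card_univ, nsmul_eq_mul, nsmul_eq_mul, ← mul_assoc, ← sq,
          ← mul_pow, Real.sqrt_sq (by positivity)]

variable [DecidableEq ι]

theorem exists_perm_sum_le_sum_mul_of_mem_doublyStochastic {R : Type*} [Field R] [LinearOrder R]
    [IsStrictOrderedRing R] {S : Matrix ι ι R} (hS : S ∈ doublyStochastic R ι)
    (c : Matrix ι ι R) : ∃ σ : Equiv.Perm ι, ∑ i, c i (σ i) ≤ ∑ i, ∑ j, S i j * c i j := by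
  let f : Matrix ι ι R →ₗ[R] R :=
    { toFun := fun M => ∑ i, ∑ j, M i j * c i j
      map_add' := fun M N => by simp only [add_apply, add_mul, sum_add_distrib]
      map_smul' := fun r M => by simp only [smul_apply, smul_eq_mul, mul_assoc, ← mul_sum]; rfl }
  rw [← SetLike.mem_coe, doublyStochastic_eq_convexHull_permMatrix] at hS
  obtain ⟨_, ⟨σ, rfl⟩, hσ⟩ :=
    (f.concaveOn convex_univ).exists_le_of_mem_convexHull (Set.subset_univ _) hS
  refine ⟨σ, le_of_eq_of_le ?_ hσ⟩
  simp [f, Equiv.Perm.permMatrix, PEquiv.toMatrix_apply]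

theorem map_sq_mem_doublyStochastic_of_mem_orthogonalGroup {W : Matrix ι ι ℝ}
    (hW : W ∈ orthogonalGroup ι ℝ) : W.map (· ^ 2) ∈ doublyStochastic ℝ ι := by
  have hrow := (mem_orthogonalGroup_iff ι ℝ).mp hW
  have hcol := (mem_orthogonalGroup_iff' ι ℝ).mp hW
  refine mem_doublyStochastic_iff_sum.mpr ⟨fun i j => sq_nonneg _, fun i => ?_, fun j => ?_⟩
  · simpa [mul_apply, sq] using congrFun (congrFun hrow i) i
  · simpa [mul_apply, sq] using congrFun (congrFun hcol j) j

theorem sum_sq_mul_mul_of_mem_orthogonalGroup {U V : Matrix ι ι ℝ}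
    (hU : U ∈ orthogonalGroup ι ℝ) (hV : V ∈ orthogonalGroup ι ℝ) (M : Matrix ι ι ℝ) :
    ∑ i, ∑ j, (U * M * V) i j ^ 2 = ∑ i, ∑ j, M i j ^ 2 := by
  have hU' : Uᵀ * U = 1 := (mem_orthogonalGroup_iff' ι ℝ).mp hU
  have hV' : V * Vᵀ = 1 := (mem_orthogonalGroup_iff ι ℝ).mp hV
  simp only [sum_sq_eq_trace_transpose_mul, transpose_mul, Matrix.mul_assoc]
  rw [← Matrix.mul_assoc Uᵀ, hU', Matrix.one_mul, ← Matrix.mul_assoc, trace_mul_comm,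
    Matrix.mul_assoc, ← Matrix.mul_assoc V, hV', Matrix.one_mul, trace_mul_comm]

theorem IsHermitian.transpose_eigenvectorUnitary_mul_mul {A : Matrix ι ι ℝ} (hA : A.IsHermitian) :
    (hA.eigenvectorUnitary : Matrix ι ι ℝ)ᵀ * A * hA.eigenvectorUnitary =
      diagonal hA.eigenvalues := by
  simpa [star_eq_conjTranspose] using hA.conjStarAlgAut_star_eigenvectorUnitary

theorem IsHermitian.exists_perm_sum_sq_sub_eigenvalues_le {A B : Matrix ι ι ℝ} (hA : A.IsHermitian)
    (hB : B.IsHermitian) :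
    ∃ σ : Equiv.Perm ι,
      ∑ i, (hA.eigenvalues i - hB.eigenvalues (σ i)) ^ 2 ≤ ∑ i, ∑ j, (A - B) i j ^ 2 := by
  set U : Matrix ι ι ℝ := ↑hA.eigenvectorUnitary
  set V : Matrix ι ι ℝ := ↑hB.eigenvectorUnitary
  set W := Uᵀ * V
  have hUt : Uᵀ ∈ orthogonalGroup ι ℝ :=
    transpose_mem_unitaryGroup_iff.mpr hA.eigenvectorUnitary.2
  have hV : V ∈ orthogonalGroup ι ℝ := hB.eigenvectorUnitary.2
  have hUUt : U * Uᵀ = 1 := (mem_orthogonalGroup_iff ι ℝ).mp hA.eigenvectorUnitary.2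
  have hVVt : V * Vᵀ = 1 := (mem_orthogonalGroup_iff ι ℝ).mp hV
  have hconj : Uᵀ * (A - B) * V = diagonal hA.eigenvalues * W - W * diagonal hB.eigenvalues :=
    calc Uᵀ * (A - B) * V = Uᵀ * A * (U * Uᵀ) * V - Uᵀ * (V * Vᵀ) * B * V := by
          rw [hUUt, hVVt, Matrix.mul_sub, Matrix.sub_mul, Matrix.mul_one, Matrix.mul_one]
      _ = (Uᵀ * A * U) * W - W * (Vᵀ * B * V) := by simp only [W, Matrix.mul_assoc]
      _ = diagonal hA.eigenvalues * W - W * diagonal hB.eigenvalues := by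
          rw [hA.transpose_eigenvectorUnitary_mul_mul, hB.transpose_eigenvectorUnitary_mul_mul]
  obtain ⟨σ, hσ⟩ := exists_perm_sum_le_sum_mul_of_mem_doublyStochastic
    (map_sq_mem_doublyStochastic_of_mem_orthogonalGroup (mul_mem hUt hV))
    (fun i j => (hA.eigenvalues i - hB.eigenvalues j) ^ 2)
  refine ⟨σ, hσ.trans_eq ?_⟩
  rw [← sum_sq_mul_mul_of_mem_orthogonalGroup hUt hV, hconj]
  refine sum_congr rfl fun i _ => sum_congr rfl fun j _ => ?_
  simp only [map_apply, sub_apply, diagonal_mul, mul_diagonal, W]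
  ring

end Matrix

/-- Hoffman–Wielandt style bound: if `A, Ã` are real symmetric `n × n` matrices and every
entry of `A - Ã` has absolute value at most `ε`, then some matching `σ` of the eigenvalues
satisfies `√(Σ_i |λ_i(A) - λ_{σ i}(Ã)|²) ≤ n ε`. -/
theorem hoffman_wielandt_truncation
    (n : ℕ) (A B : Matrix (Fin n) (Fin n) ℝ)
    (hA : A.IsHermitian) (hB : B.IsHermitian)
    (ε : ℝ) (hε : ∀ i j, |A i j - B i j| ≤ ε) :
    ∃ σ : Equiv.Perm (Fin n),
      Real.sqrt (∑ i, |hA.eigenvalues i - hB.eigenvalues (σ i)| ^ 2) ≤ n * ε := by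
  obtain ⟨σ, hσ⟩ := hA.exists_perm_sum_sq_sub_eigenvalues_le hB
  refine ⟨σ, ?_⟩
  simp_rw [sq_abs]
  calc √(∑ i, (hA.eigenvalues i - hB.eigenvalues (σ i)) ^ 2)
      ≤ √(∑ i, ∑ j, (A - B) i j ^ 2) := Real.sqrt_le_sqrt hσ
    _ ≤ n * ε := by
        simpa using Matrix.sqrt_sum_sq_le_card_mul_of_abs_le (M := A - B) (by simpa using hε)
end

section
/- Let A, B ∈ ℂ^{n×n×n}. Suppose for each mode d ∈ {1,2,3} the Gram matrices G_d(A) and G_d(B) have simple spectra, equal as multisets, with unitary diagonalizations G_d(A) = U_d Λ_d U_d* and G_d(B) = V_d Λ_d V_d* (eigenvalues in nonincreasing order). Define the core tensors S_A = (U₁*,U₂*,U₃*)↷A and S_B = (V₁*,V₂*,V₃*)↷B. Then there exist unitary L, R, T with (L,R,T)↷A = B if and only if there exist diagonal unitary matrices D₁, D₂, D₃ with entries in the unit circle such that (D₁,D₂,D₃)↷S_A = S_B. -/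
open Matrix

/-- The multilinear change-of-basis action of a triple of `n × n` matrices on a 3-tensor. -/
noncomputable def tensorAct {n : ℕ} (L R T : Matrix (Fin n) (Fin n) ℂ)
    (A : Fin n → Fin n → Fin n → ℂ) : Fin n → Fin n → Fin n → ℂ :=
  fun i j k => ∑ p, ∑ q, ∑ r, L i p * R j q * T k r * A p q r

/-- Mode-1 flattening. -/
def flatten1 {n : ℕ} (X : Fin n → Fin n → Fin n → ℂ) :
    Matrix (Fin n) (Fin n × Fin n) ℂ := Matrix.of fun i jk => X i jk.1 jk.2

/-- Mode-2 flattening. -/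
def flatten2 {n : ℕ} (X : Fin n → Fin n → Fin n → ℂ) :
    Matrix (Fin n) (Fin n × Fin n) ℂ := Matrix.of fun j ik => X ik.1 j ik.2

/-- Mode-3 flattening. -/
def flatten3 {n : ℕ} (X : Fin n → Fin n → Fin n → ℂ) :
    Matrix (Fin n) (Fin n × Fin n) ℂ := Matrix.of fun k ij => X ij.1 ij.2 k

/-- Mode-d Gram matrices `G_d(X) = X₍d₎ X₍d₎ᴴ`. -/
noncomputable def gram1 {n : ℕ} (X : Fin n → Fin n → Fin n → ℂ) :
    Matrix (Fin n) (Fin n) ℂ := flatten1 X * (flatten1 X)ᴴ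
noncomputable def gram2 {n : ℕ} (X : Fin n → Fin n → Fin n → ℂ) :
    Matrix (Fin n) (Fin n) ℂ := flatten2 X * (flatten2 X)ᴴ
noncomputable def gram3 {n : ℕ} (X : Fin n → Fin n → Fin n → ℂ) :
    Matrix (Fin n) (Fin n) ℂ := flatten3 X * (flatten3 X)ᴴ

open Kronecker

/-!
Under the action, the mode-`d` Gram matrix is conjugated by the mode-`d` factor, the other two
factors cancelling because their Kronecker product is unitary. So if `(L, R, T) ↷ A = B`, then
`L U₁` and `V₁` are two unitary eigenbases of `G₁(B)` for the same ordered simple spectrum,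
whence `V₁ᴴ L U₁` commutes with `Λ₁` and is a diagonal phase matrix; likewise for the other
modes, and these phases carry `S_A` to `S_B`. Conversely, phases `Dᵢ` give the unitaries
`Vᵢ Dᵢ Uᵢᴴ`.
-/

section Phases

variable {ι : Type*} [Fintype ι] [DecidableEq ι]

theorem Matrix.IsDiag.of_commute_diagonal {α : Type*} [CommRing α] [NoZeroDivisors α]
    {d : ι → α} (hd : Function.Injective d) {P : Matrix ι ι α} (h : Commute P (diagonal d)) :
    P.IsDiag := by
  intro i j hij
  have hentry := congrFun (congrFun h.eq i) j
  rw [mul_diagonal, diagonal_mul] at hentry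
  have hprod : P i j * (d j - d i) = 0 := by linear_combination hentry
  exact (mul_eq_zero.mp hprod).resolve_right (sub_ne_zero.mpr (hd.ne hij).symm)

theorem Matrix.diagonal_mem_unitaryGroup_iff {α : Type*} [CommRing α] [StarRing α]
    {d : ι → α} : diagonal d ∈ unitaryGroup ι α ↔ ∀ i, d i ∈ unitary α := by
  simp only [mem_unitaryGroup_iff', star_eq_conjTranspose, diagonal_conjTranspose,
    diagonal_mul_diagonal, ← diagonal_one, diagonal_eq_diagonal_iff, Pi.star_apply,
    Unitary.mem_iff_star_mul_self]

theorem RCLike.mem_unitary_iff_norm_eq_one {𝕜 : Type*} [RCLike 𝕜] {z : 𝕜} :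
    z ∈ unitary 𝕜 ↔ ‖z‖ = 1 := by
  rw [Unitary.mem_iff_star_mul_self, RCLike.star_def, RCLike.conj_mul]
  norm_cast
  exact pow_eq_one_iff_of_nonneg (norm_nonneg z) two_ne_zero

variable {𝕜 : Type*} [RCLike 𝕜]

theorem exists_phases_of_conj_diagonal_eq {d : ι → 𝕜} (hd : Function.Injective d)
    {V W : Matrix ι ι 𝕜} (hV : V ∈ unitaryGroup ι 𝕜) (hW : W ∈ unitaryGroup ι 𝕜)
    (h : V * diagonal d * Vᴴ = W * diagonal d * Wᴴ) :
    ∃ D : ι → 𝕜, (∀ i, ‖D i‖ = 1) ∧ Vᴴ * W = diagonal D := by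
  have hVV : Vᴴ * V = 1 := mem_unitaryGroup_iff'.mp hV
  have hWW : Wᴴ * W = 1 := mem_unitaryGroup_iff'.mp hW
  have hcomm : Commute (Vᴴ * W) (diagonal d) :=
    calc Vᴴ * W * diagonal d = Vᴴ * (W * diagonal d * Wᴴ) * W := by
          simp only [Matrix.mul_assoc, hWW, Matrix.mul_one]
      _ = Vᴴ * (V * diagonal d * Vᴴ) * W := by rw [h]
      _ = diagonal d * (Vᴴ * W) := by simp only [← Matrix.mul_assoc, hVV, Matrix.one_mul]
  have hdiag : Vᴴ * W = diagonal (Vᴴ * W).diag :=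
    (Matrix.IsDiag.of_commute_diagonal hd hcomm).diagonal_diag.symm
  have hunit : diagonal (Vᴴ * W).diag ∈ unitaryGroup ι 𝕜 :=
    hdiag ▸ mul_mem (Unitary.star_mem hV) hW
  exact ⟨_, fun i => RCLike.mem_unitary_iff_norm_eq_one.mp
    (diagonal_mem_unitaryGroup_iff.mp hunit i), hdiag⟩

theorem exists_phases_of_conj_of_diagonalizations {d : ι → 𝕜} (hd : Function.Injective d)
    {U V L G G' : Matrix ι ι 𝕜} (hU : U ∈ unitaryGroup ι 𝕜) (hV : V ∈ unitaryGroup ι 𝕜)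
    (hL : L ∈ unitaryGroup ι 𝕜) (hG : G = U * diagonal d * Uᴴ)
    (hG' : G' = V * diagonal d * Vᴴ) (hconj : G' = L * G * Lᴴ) :
    ∃ D : ι → 𝕜, (∀ i, ‖D i‖ = 1) ∧ Vᴴ * (L * U) = diagonal D :=
  exists_phases_of_conj_diagonal_eq hd hV (mul_mem hL hU) <| by
    rw [← hG', hconj, hG, conjTranspose_mul]
    simp only [Matrix.mul_assoc]

end Phases

section TensorAct

variable {n : ℕ}

theorem flatten1_injective : Function.Injective (flatten1 (n := n)) :=
  fun _ _ h => funext fun i => funext fun j => funext fun k => congrFun (congrFun h i) (j, k)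

theorem flatten1_tensorAct (L R T : Matrix (Fin n) (Fin n) ℂ) (A : Fin n → Fin n → Fin n → ℂ) :
    flatten1 (tensorAct L R T A) = L * flatten1 A * (R ⊗ₖ T)ᵀ := by
  ext i ⟨j, k⟩
  simp only [flatten1, tensorAct, mul_apply, of_apply, transpose_apply, kroneckerMap_apply,
    Fintype.sum_prod_type, Finset.sum_mul]
  rw [Finset.sum_comm]
  refine Finset.sum_congr rfl fun q _ => ?_
  rw [Finset.sum_comm]
  exact Finset.sum_congr rfl fun r _ => Finset.sum_congr rfl fun p _ => by ring

theorem flatten2_tensorAct (L R T : Matrix (Fin n) (Fin n) ℂ) (A : Fin n → Fin n → Fin n → ℂ) :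
    flatten2 (tensorAct L R T A) = R * flatten2 A * (L ⊗ₖ T)ᵀ := by
  ext j ⟨i, k⟩
  simp only [flatten2, tensorAct, mul_apply, of_apply, transpose_apply, kroneckerMap_apply,
    Fintype.sum_prod_type, Finset.sum_mul]
  refine Finset.sum_congr rfl fun p _ => ?_
  rw [Finset.sum_comm]
  exact Finset.sum_congr rfl fun r _ => Finset.sum_congr rfl fun q _ => by ring

theorem flatten3_tensorAct (L R T : Matrix (Fin n) (Fin n) ℂ) (A : Fin n → Fin n → Fin n → ℂ) :
    flatten3 (tensorAct L R T A) = T * flatten3 A * (L ⊗ₖ R)ᵀ := by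
  ext k ⟨i, j⟩
  simp only [flatten3, tensorAct, mul_apply, of_apply, transpose_apply, kroneckerMap_apply,
    Fintype.sum_prod_type, Finset.sum_mul]
  exact Finset.sum_congr rfl fun p _ => Finset.sum_congr rfl fun q _ =>
    Finset.sum_congr rfl fun r _ => by ring

theorem tensorAct_mul (L R T L' R' T' : Matrix (Fin n) (Fin n) ℂ)
    (A : Fin n → Fin n → Fin n → ℂ) :
    tensorAct (L * L') (R * R') (T * T') A = tensorAct L R T (tensorAct L' R' T' A) := by
  apply flatten1_injective
  rw [flatten1_tensorAct, flatten1_tensorAct, flatten1_tensorAct, mul_kronecker_mul,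
    transpose_mul]
  simp only [Matrix.mul_assoc]

theorem tensorAct_one (A : Fin n → Fin n → Fin n → ℂ) : tensorAct 1 1 1 A = A := by
  apply flatten1_injective
  rw [flatten1_tensorAct, one_kronecker_one, transpose_one, Matrix.mul_one, Matrix.one_mul]

theorem tensorAct_tensorAct_conjTranspose {U₁ U₂ U₃ : Matrix (Fin n) (Fin n) ℂ}
    (hU₁ : U₁ ∈ unitaryGroup (Fin n) ℂ) (hU₂ : U₂ ∈ unitaryGroup (Fin n) ℂ)
    (hU₃ : U₃ ∈ unitaryGroup (Fin n) ℂ) (A : Fin n → Fin n → Fin n → ℂ) :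
    tensorAct U₁ U₂ U₃ (tensorAct U₁ᴴ U₂ᴴ U₃ᴴ A) = A := by
  simp only [← tensorAct_mul, ← star_eq_conjTranspose, Unitary.mul_star_self_of_mem hU₁,
    Unitary.mul_star_self_of_mem hU₂, Unitary.mul_star_self_of_mem hU₃, tensorAct_one]

end TensorAct

section Gram

variable {α : Type*} [CommRing α] [StarRing α]

theorem Matrix.mul_mul_conjTranspose_of_mem_unitaryGroup {m k : Type*} [Fintype m] [Fintype k]
    [DecidableEq k] (P : Matrix m m α) (X : Matrix m k α) {W : Matrix k k α}
    (hW : W ∈ unitaryGroup k α) :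
    P * X * W * (P * X * W)ᴴ = P * (X * Xᴴ) * Pᴴ := by
  have hWW : W * Wᴴ = 1 := mem_unitaryGroup_iff.mp hW
  simp only [conjTranspose_mul, Matrix.mul_assoc]
  rw [← Matrix.mul_assoc W, hWW, Matrix.one_mul]

theorem Matrix.transpose_kronecker_mem_unitaryGroup {m k : Type*} [Fintype m] [DecidableEq m]
    [Fintype k] [DecidableEq k] {R : Matrix m m α} {T : Matrix k k α}
    (hR : R ∈ unitaryGroup m α) (hT : T ∈ unitaryGroup k α) :
    (R ⊗ₖ T)ᵀ ∈ unitaryGroup (m × k) α :=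
  transpose_mem_unitaryGroup_iff.mpr (kronecker_mem_unitary hR hT)

variable {n : ℕ} {L R T : Matrix (Fin n) (Fin n) ℂ}

theorem gram1_tensorAct (hR : R ∈ unitaryGroup (Fin n) ℂ) (hT : T ∈ unitaryGroup (Fin n) ℂ)
    (A : Fin n → Fin n → Fin n → ℂ) : gram1 (tensorAct L R T A) = L * gram1 A * Lᴴ := by
  rw [gram1, gram1, flatten1_tensorAct,
    mul_mul_conjTranspose_of_mem_unitaryGroup _ _ (transpose_kronecker_mem_unitaryGroup hR hT)]

theorem gram2_tensorAct (hL : L ∈ unitaryGroup (Fin n) ℂ) (hT : T ∈ unitaryGroup (Fin n) ℂ)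
    (A : Fin n → Fin n → Fin n → ℂ) : gram2 (tensorAct L R T A) = R * gram2 A * Rᴴ := by
  rw [gram2, gram2, flatten2_tensorAct,
    mul_mul_conjTranspose_of_mem_unitaryGroup _ _ (transpose_kronecker_mem_unitaryGroup hL hT)]

theorem gram3_tensorAct (hL : L ∈ unitaryGroup (Fin n) ℂ) (hR : R ∈ unitaryGroup (Fin n) ℂ)
    (A : Fin n → Fin n → Fin n → ℂ) : gram3 (tensorAct L R T A) = T * gram3 A * Tᴴ := by
  rw [gram3, gram3, flatten3_tensorAct,
    mul_mul_conjTranspose_of_mem_unitaryGroup _ _ (transpose_kronecker_mem_unitaryGroup hL hR)]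

end Gram

/-- HOSVD reduction to diagonal phases: suppose for each mode `d ∈ {1,2,3}` the Gram
matrices of `A` and `B` share a common simple spectrum `Λ_d` (listed in strictly decreasing
order) with unitary diagonalizations `G_d(A) = U_d Λ_d U_dᴴ` and `G_d(B) = V_d Λ_d V_dᴴ`.
Let `S_A = (U₁ᴴ,U₂ᴴ,U₃ᴴ) ↷ A` and `S_B = (V₁ᴴ,V₂ᴴ,V₃ᴴ) ↷ B`.  Then `A` and `B` are
unitarily isomorphic iff `S_A` and `S_B` are related by diagonal unitary phase matrices. -/
theorem hosvd_fundamental_condition {n : ℕ}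
    (A B : Fin n → Fin n → Fin n → ℂ)
    (Λ₁ Λ₂ Λ₃ : Fin n → ℝ)
    (hΛ₁ : StrictAnti Λ₁) (hΛ₂ : StrictAnti Λ₂) (hΛ₃ : StrictAnti Λ₃)
    (U₁ U₂ U₃ V₁ V₂ V₃ : Matrix (Fin n) (Fin n) ℂ)
    (hU₁ : U₁ ∈ Matrix.unitaryGroup (Fin n) ℂ)
    (hU₂ : U₂ ∈ Matrix.unitaryGroup (Fin n) ℂ)
    (hU₃ : U₃ ∈ Matrix.unitaryGroup (Fin n) ℂ)
    (hV₁ : V₁ ∈ Matrix.unitaryGroup (Fin n) ℂ)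
    (hV₂ : V₂ ∈ Matrix.unitaryGroup (Fin n) ℂ)
    (hV₃ : V₃ ∈ Matrix.unitaryGroup (Fin n) ℂ)
    (hGA₁ : gram1 A = U₁ * Matrix.diagonal (fun i => (Λ₁ i : ℂ)) * U₁ᴴ)
    (hGA₂ : gram2 A = U₂ * Matrix.diagonal (fun i => (Λ₂ i : ℂ)) * U₂ᴴ)
    (hGA₃ : gram3 A = U₃ * Matrix.diagonal (fun i => (Λ₃ i : ℂ)) * U₃ᴴ)
    (hGB₁ : gram1 B = V₁ * Matrix.diagonal (fun i => (Λ₁ i : ℂ)) * V₁ᴴ)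
    (hGB₂ : gram2 B = V₂ * Matrix.diagonal (fun i => (Λ₂ i : ℂ)) * V₂ᴴ)
    (hGB₃ : gram3 B = V₃ * Matrix.diagonal (fun i => (Λ₃ i : ℂ)) * V₃ᴴ) :
    (∃ L R T : Matrix (Fin n) (Fin n) ℂ,
        L ∈ Matrix.unitaryGroup (Fin n) ℂ ∧ R ∈ Matrix.unitaryGroup (Fin n) ℂ ∧
        T ∈ Matrix.unitaryGroup (Fin n) ℂ ∧ tensorAct L R T A = B) ↔
    (∃ D₁ D₂ D₃ : Fin n → ℂ,
        (∀ i, ‖D₁ i‖ = 1) ∧ (∀ i, ‖D₂ i‖ = 1) ∧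
        (∀ i, ‖D₃ i‖ = 1) ∧
        tensorAct (Matrix.diagonal D₁) (Matrix.diagonal D₂) (Matrix.diagonal D₃)
            (tensorAct U₁ᴴ U₂ᴴ U₃ᴴ A)
          = tensorAct V₁ᴴ V₂ᴴ V₃ᴴ B) := by
  have hΛ : ∀ {Λ : Fin n → ℝ}, StrictAnti Λ → Function.Injective (fun i => (Λ i : ℂ)) :=
    fun h => Complex.ofReal_injective.comp h.injective
  constructor
  · rintro ⟨L, R, T, hL, hR, hT, hact⟩
    obtain ⟨D₁, hD₁, hP₁⟩ := exists_phases_of_conj_of_diagonalizations (hΛ hΛ₁) hU₁ hV₁ hL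
      hGA₁ hGB₁ (by rw [← hact, gram1_tensorAct hR hT])
    obtain ⟨D₂, hD₂, hP₂⟩ := exists_phases_of_conj_of_diagonalizations (hΛ hΛ₂) hU₂ hV₂ hR
      hGA₂ hGB₂ (by rw [← hact, gram2_tensorAct hL hT])
    obtain ⟨D₃, hD₃, hP₃⟩ := exists_phases_of_conj_of_diagonalizations (hΛ hΛ₃) hU₃ hV₃ hT
      hGA₃ hGB₃ (by rw [← hact, gram3_tensorAct hL hR])
    refine ⟨D₁, D₂, D₃, hD₁, hD₂, hD₃, ?_⟩
    rw [← hP₁, ← hP₂, ← hP₃, tensorAct_mul, tensorAct_mul,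
      tensorAct_tensorAct_conjTranspose hU₁ hU₂ hU₃, hact]
  · rintro ⟨D₁, D₂, D₃, hD₁, hD₂, hD₃, hcore⟩
    have hphase : ∀ {D : Fin n → ℂ}, (∀ i, ‖D i‖ = 1) → diagonal D ∈ unitaryGroup (Fin n) ℂ :=
      fun hD => diagonal_mem_unitaryGroup_iff.mpr fun i =>
        RCLike.mem_unitary_iff_norm_eq_one.mpr (hD i)
    refine ⟨V₁ * diagonal D₁ * U₁ᴴ, V₂ * diagonal D₂ * U₂ᴴ, V₃ * diagonal D₃ * U₃ᴴ,
      mul_mem (mul_mem hV₁ (hphase hD₁)) (Unitary.star_mem hU₁),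
      mul_mem (mul_mem hV₂ (hphase hD₂)) (Unitary.star_mem hU₂),
      mul_mem (mul_mem hV₃ (hphase hD₃)) (Unitary.star_mem hU₃), ?_⟩
    rw [tensorAct_mul, tensorAct_mul, hcore, tensorAct_tensorAct_conjTranspose hV₁ hV₂ hV₃]
end

section
/- Let v₁,…,vₙ be orthonormal vectors in ℂⁿ and let D = diag(d₁,…,dₙ) with d₁ > d₂ > ⋯ > dₙ > 0 and d_i − d_{i+1} > δ > 0 for all i. If for some indices i ≠ j the coordinates of vₙ satisfy |v_{n,i}| > ε and |v_{n,j}| > ε, then there exists k ∈ {1,…,n−1} such that |⟨vₙ, D vₖ⟩| > εδ/√(2(n−1)). -/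
/-! With `u = v_last` and `D = diag d`, the number `μ = ⟪u, D u⟫` is real and `(D - μ) u ⟂ u`,
while `⟪v_k, (D - μ) u⟫ = conj ⟪u, D v_k⟫` for `k ≠ last`. Parseval therefore gives
`∑_{k ≠ last} |⟪u, D v_k⟫|² = ‖(D - μ) u‖² = ∑_t |u_t|² (d_t - μ)²`, the spread of `d` about `μ`
under the weights `|u_t|²`. Two weights exceed `ε²` at values of `d` more than `δ` apart, so the
spread exceeds `ε² δ² / 2`, and one of the `m` summands exceeds `ε² δ² / (2 m)`. -/

open Finset
open scoped InnerProductSpace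

section
variable {𝕜 E ι : Type*} [RCLike 𝕜] [NormedAddCommGroup E] [InnerProductSpace 𝕜 E]
  [Fintype ι] [DecidableEq ι]

theorem Orthonormal.sum_erase_sq_norm_inner_of_inner_eq_zero {v : ι → E} (hv : Orthonormal 𝕜 v)
    (hcard : Fintype.card ι = Module.finrank 𝕜 E) {l : ι} {x : E} (hx : ⟪v l, x⟫_𝕜 = 0) :
    ∑ k ∈ univ.erase l, ‖⟪v k, x⟫_𝕜‖ ^ 2 = ‖x‖ ^ 2 := by
  have : Nonempty ι := ⟨l⟩
  let b := OrthonormalBasis.mk hv (hv.linearIndependent.span_eq_top_of_card_eq_finrank hcard).ge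
  rw [← b.sum_sq_norm_inner_right x, ← add_sum_erase _ _ (mem_univ l)]
  simp [b, hx]

theorem LinearMap.IsSymmetric.sum_erase_sq_norm_inner_apply {T : E →ₗ[𝕜] E} (hT : T.IsSymmetric)
    {v : ι → E} (hv : Orthonormal 𝕜 v) (hcard : Fintype.card ι = Module.finrank 𝕜 E) (l : ι) :
    ∑ k ∈ univ.erase l, ‖⟪v l, T (v k)⟫_𝕜‖ ^ 2
      = ‖T (v l) - (RCLike.re ⟪v l, T (v l)⟫_𝕜 : 𝕜) • v l‖ ^ 2 := by
  rw [← hv.sum_erase_sq_norm_inner_of_inner_eq_zero hcard]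
  · refine sum_congr rfl fun k hk => ?_
    rw [inner_sub_right, inner_smul_right, hv.inner_eq_zero (ne_of_mem_erase hk), mul_zero,
      sub_zero, ← hT, ← inner_conj_symm, RCLike.norm_conj]
  · rw [inner_sub_right, inner_smul_right, inner_self_eq_norm_sq_to_K, hv.norm_eq_one,
      hT.coe_re_inner_self_apply]
    simp
end

theorem mul_sq_sub_div_two_le_sum_mul_sq_sub {ι : Type*} [Fintype ι] {p x : ι → ℝ}
    (hp : ∀ t, 0 ≤ p t) {c : ℝ} (hc : 0 ≤ c) {i j : ι} (hij : i ≠ j) (hi : c ≤ p i)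
    (hj : c ≤ p j) (μ : ℝ) :
    c * (x i - x j) ^ 2 / 2 ≤ ∑ t, p t * (x t - μ) ^ 2 := by
  classical
  have hpair : p i * (x i - μ) ^ 2 + p j * (x j - μ) ^ 2 ≤ ∑ t, p t * (x t - μ) ^ 2 := by
    rw [← sum_pair (f := fun t => p t * (x t - μ) ^ 2) hij]
    exact sum_le_univ_sum_of_nonneg fun t => mul_nonneg (hp t) (sq_nonneg _)
  nlinarith [mul_le_mul_of_nonneg_right hi (sq_nonneg (x i - μ)),
    mul_le_mul_of_nonneg_right hj (sq_nonneg (x j - μ)),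
    mul_nonneg hc (sq_nonneg (x i + x j - 2 * μ))]

theorem Fin.lt_abs_sub_of_forall_lt_sub_succ {m : ℕ} {d : Fin (m + 1) → ℝ} {δ : ℝ} (hδ : 0 ≤ δ)
    (hgap : ∀ i : Fin m, d i.castSucc - d i.succ > δ) {i j : Fin (m + 1)} (hij : i ≠ j) :
    δ < |d i - d j| := by
  wlog h : i < j generalizing i j
  · rw [abs_sub_comm]
    exact this hij.symm (lt_of_le_of_ne (not_lt.mp h) hij.symm)
  have hanti : StrictAnti d := Fin.strictAnti_iff_succ_lt.mpr fun k => by linarith [hgap k]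
  obtain ⟨k, rfl⟩ := Fin.exists_castSucc_eq.mpr (Fin.ne_last_of_lt h)
  have : d j ≤ d k.succ := hanti.antitone (Fin.castSucc_lt_iff_succ_le.mp h)
  rw [abs_of_pos (by linarith [hgap k])]
  linarith [hgap k]

theorem EuclideanSpace.orthonormal_toLp {ι κ : Type*} [Fintype ι] {v : κ → ι → ℂ}
    (hnorm : ∀ a, ∑ t, ‖v a t‖ ^ 2 = 1)
    (horth : ∀ a b, a ≠ b → ∑ t, (starRingEnd ℂ) (v a t) * v b t = 0) :
    Orthonormal ℂ fun a => WithLp.toLp 2 (v a) := by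
  refine ⟨fun a => ?_, fun a b hab => ?_⟩
  · simp [EuclideanSpace.norm_eq, hnorm]
  · change ⟪_, _⟫_ℂ = 0
    rw [EuclideanSpace.inner_toLp_toLp, dotProduct, ← horth a b hab]
    exact sum_congr rfl fun t _ => mul_comm _ _

section
variable {ι : Type*} [Fintype ι] [DecidableEq ι] (d : ι → ℝ)

theorem Matrix.isSymmetric_toEuclideanLin_diagonal_ofReal :
    (toEuclideanLin (diagonal fun t => (d t : ℂ))).IsSymmetric :=
  isSymmetric_toEuclideanLin_iff.mpr <|
    isHermitian_diagonal_iff.mpr fun t => by simp [IsSelfAdjoint]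

theorem Matrix.inner_toLp_toEuclideanLin_diagonal_ofReal (x y : ι → ℂ) :
    ⟪WithLp.toLp 2 x, toEuclideanLin (diagonal fun t => (d t : ℂ)) (WithLp.toLp 2 y)⟫_ℂ
      = ∑ t, (starRingEnd ℂ) (x t) * ((d t : ℂ) * y t) := by
  simp [EuclideanSpace.inner_toLp_toLp, dotProduct, mulVec_diagonal, mul_comm]

theorem Matrix.norm_sq_toEuclideanLin_diagonal_ofReal_sub_smul (x : ι → ℂ) (μ : ℝ) :
    ‖toEuclideanLin (diagonal fun t => (d t : ℂ)) (WithLp.toLp 2 x) - (μ : ℂ) • WithLp.toLp 2 x‖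
        ^ 2
      = ∑ t, ‖x t‖ ^ 2 * (d t - μ) ^ 2 := by
  rw [EuclideanSpace.norm_sq_eq]
  refine sum_congr rfl fun t _ => ?_
  simp only [toLpLin_toLp, toLin'_apply, mulVec_diagonal, WithLp.ofLp_sub, WithLp.ofLp_smul,
    Pi.sub_apply, Pi.smul_apply, smul_eq_mul]
  rw [← sub_mul, ← Complex.ofReal_sub, norm_mul, Complex.norm_real, Real.norm_eq_abs, mul_pow,
    sq_abs, mul_comm]
end

theorem orthonormal_offdiagonal_lower_bound_general (m : ℕ)
    (v : Fin (m + 1) → Fin (m + 1) → ℂ)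
    (hnorm : ∀ a, ∑ t, ‖v a t‖ ^ 2 = 1)
    (horth : ∀ a b, a ≠ b → ∑ t, (starRingEnd ℂ) (v a t) * v b t = 0)
    (d : Fin (m + 1) → ℝ)
    (δ : ℝ) (hδ : 0 < δ)
    (hgap : ∀ i : Fin m, d i.castSucc - d i.succ > δ)
    (ε : ℝ) (hε : 0 < ε)
    (i j : Fin (m + 1)) (hij : i ≠ j)
    (hvi : ‖v (Fin.last m) i‖ > ε)
    (hvj : ‖v (Fin.last m) j‖ > ε) :
    ∃ k : Fin (m + 1), k ≠ Fin.last m ∧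
      ‖∑ t, (starRingEnd ℂ) (v (Fin.last m) t) * ((d t : ℂ) * v k t)‖ >
        ε * δ / Real.sqrt (2 * m) := by
  set e : Fin (m + 1) → EuclideanSpace ℂ (Fin (m + 1)) := fun a => WithLp.toLp 2 (v a)
  set D := Matrix.toEuclideanLin (Matrix.diagonal fun t => (d t : ℂ))
  set μ : ℝ := RCLike.re ⟪e (Fin.last m), D (e (Fin.last m))⟫_ℂ
  have hm : 0 < m := Nat.pos_of_ne_zero (by rintro rfl; exact hij (Fin.ext (by omega)))
  have hoff := (Matrix.isSymmetric_toEuclideanLin_diagonal_ofReal d).sum_erase_sq_norm_inner_apply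
    (EuclideanSpace.orthonormal_toLp hnorm horth) (by simp) (Fin.last m)
  -- recasts `RCLike.ofReal` as `Complex.ofReal`
  change _ = ‖D (e (Fin.last m)) - (μ : ℂ) • e (Fin.last m)‖ ^ 2 at hoff
  rw [Matrix.norm_sq_toEuclideanLin_diagonal_ofReal_sub_smul] at hoff
  have hspread : ε ^ 2 * δ ^ 2 / 2 < ∑ t, ‖v (Fin.last m) t‖ ^ 2 * (d t - μ) ^ 2 :=
    calc ε ^ 2 * δ ^ 2 / 2 < ε ^ 2 * (d i - d j) ^ 2 / 2 := by
          have := Fin.lt_abs_sub_of_forall_lt_sub_succ hδ.le hgap hij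
          rw [← sq_abs (d i - d j)]
          gcongr
      _ ≤ _ := mul_sq_sub_div_two_le_sum_mul_sq_sub (fun _ => sq_nonneg _) (sq_nonneg ε) hij
          (by gcongr) (by gcongr) μ
  obtain ⟨k, hk, hlt⟩ : ∃ k ∈ univ.erase (Fin.last m),
      ε ^ 2 * δ ^ 2 / (2 * m) < ‖⟪e (Fin.last m), D (e k)⟫_ℂ‖ ^ 2 := by
    refine exists_lt_of_sum_lt (hoff ▸ lt_of_eq_of_lt ?_ hspread)
    simp only [sum_const, card_erase_of_mem, mem_univ, card_univ, Fintype.card_fin,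
      add_tsub_cancel_right, nsmul_eq_mul]
    field_simp
  refine ⟨k, ne_of_mem_erase hk, ?_⟩
  rw [← Matrix.inner_toLp_toEuclideanLin_diagonal_ofReal]
  apply lt_of_pow_lt_pow_left₀ 2 (norm_nonneg _)
  rwa [div_pow, mul_pow, Real.sq_sqrt (by positivity)]

/-- Let `v 0, …, v m` be orthonormal vectors in `ℂ^{m+1}` and `D = diag d` with strictly
decreasing positive entries and consecutive gaps `> δ`.  If the last vector has two
coordinates of modulus `> ε`, then `|⟨v_last, D v_k⟩| > ε δ / √(2 m)` for some `k ≠ last`. -/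
theorem orthonormal_offdiagonal_lower_bound (m : ℕ)
    (v : Fin (m + 1) → Fin (m + 1) → ℂ)
    (hnorm : ∀ a, ∑ t, ‖v a t‖ ^ 2 = 1)
    (horth : ∀ a b, a ≠ b → ∑ t, (starRingEnd ℂ) (v a t) * v b t = 0)
    (d : Fin (m + 1) → ℝ)
    (hpos : ∀ i, 0 < d i) (hmono : StrictAnti d)
    (δ : ℝ) (hδ : 0 < δ)
    (hgap : ∀ i : Fin m, d i.castSucc - d i.succ > δ)
    (ε : ℝ) (hε : 0 < ε)
    (i j : Fin (m + 1)) (hij : i ≠ j)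
    (hvi : ‖v (Fin.last m) i‖ > ε)
    (hvj : ‖v (Fin.last m) j‖ > ε) :
    ∃ k : Fin (m + 1), k ≠ Fin.last m ∧
      ‖∑ t, (starRingEnd ℂ) (v (Fin.last m) t) * ((d t : ℂ) * v k t)‖ >
        ε * δ / Real.sqrt (2 * m) :=
  orthonormal_offdiagonal_lower_bound_general m v hnorm horth d δ hδ hgap ε hε i j hij hvi hvj
end

section
/- Let A, B ∈ ℂ^{n×n×n} and suppose for some mode d and eigenvalue indices i < j, G_d(B) has eigenvalue gap λ_i(G_d(B)) − λ_j(G_d(B)) < δ − 2ε, while every gap of G_d(A) between distinct sorted eigenvalues is at least δ. Then the unitary orbit distance satisfies dist_ℂ(A,B) > ε/(‖A‖_F + ‖B‖_F). -/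
open Matrix

/-- The Frobenius norm of a 3-tensor. -/
noncomputable def tensorFrob {n : ℕ} (A : Fin n → Fin n → Fin n → ℂ) : ℝ :=
  Real.sqrt (∑ i, ∑ j, ∑ k, ‖A i j k‖ ^ 2)

/-- Mode-`d` flattening, `d : Fin 3`. -/
def flattenMode {n : ℕ} (d : Fin 3) (X : Fin n → Fin n → Fin n → ℂ) :
    Matrix (Fin n) (Fin n × Fin n) ℂ :=
  match d with
  | 0 => Matrix.of fun i jk => X i jk.1 jk.2
  | 1 => Matrix.of fun j ik => X ik.1 j ik.2
  | 2 => Matrix.of fun k ij => X ij.1 ij.2 k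

/-- Mode-`d` Gram matrix. -/
noncomputable def gramMode {n : ℕ} (d : Fin 3) (X : Fin n → Fin n → Fin n → ℂ) :
    Matrix (Fin n) (Fin n) ℂ :=
  flattenMode d X * (flattenMode d X)ᴴ

/-- The unitary orbit distance between two 3-tensors. -/
noncomputable def unitaryOrbitDist {n : ℕ} (A B : Fin n → Fin n → Fin n → ℂ) : ℝ :=
  sInf {r : ℝ | ∃ L R T : Matrix (Fin n) (Fin n) ℂ,
    L ∈ Matrix.unitaryGroup (Fin n) ℂ ∧ R ∈ Matrix.unitaryGroup (Fin n) ℂ ∧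
    T ∈ Matrix.unitaryGroup (Fin n) ℂ ∧ r = tensorFrob (tensorAct L R T A - B)}

/-!
Flattening along mode `d` turns the action of `(L, R, T)` into `X ↦ U X Q` with `U`, `Q` unitary,
so `G_d((L, R, T) • A) = U G_d(A) U*`, and `‖X Xᴴ - Y Yᴴ‖ ≤ (‖X‖ + ‖Y‖) ‖X - Y‖` bounds
`‖G_d(A) - U* G_d(B) U‖` by `(‖A‖_F + ‖B‖_F)` times the distance between `(L, R, T) • A` and `B`.

The spectral input is a stability property of eigenvalue gaps: if `T` has an orthonormal
eigenbasis with eigenvalues pairwise `δ` apart and `S` has orthogonal eigenvectors `v₁, v₂`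
with eigenvalues `μ₁, μ₂`, then `δ ≤ |μ₁ - μ₂| + 2 ‖T - S‖`.
Indeed `v₁` is an approximate eigenvector of `T`, so `μ₁` lies within `‖T - S‖` of some eigenvalue
`λ_a`; a nonzero `w ∈ span {v₁, v₂}` orthogonal to the `a`-th eigenvector of `T` then satisfies
`(δ - ‖T - S‖) ‖w‖ ≤ ‖(T - μ₁) w‖ ≤ (‖T - S‖ + |μ₁ - μ₂|) ‖w‖`.

Since the gap of `G_d(B)` is strictly below `δ - 2ε`, every element of the set whose infimum is
the orbit distance is bounded below by one common constant exceeding `ε / (‖A‖_F + ‖B‖_F)`.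
-/

open scoped InnerProductSpace Kronecker
open WithLp

attribute [local instance] Matrix.frobeniusNormedAddCommGroup

section Perturbation

variable {𝕜 E ι : Type*} [RCLike 𝕜] [NormedAddCommGroup E] [InnerProductSpace 𝕜 E]
  [Fintype ι] {T S : E →L[𝕜] E} {b : OrthonormalBasis ι 𝕜 E} {lam : ι → ℝ}

theorem OrthonormalBasis.inner_apply_of_apply_eq_smul
    (hT : ∀ k, T (b k) = (lam k : 𝕜) • b k) (x : E) (k : ι) :
    ⟪b k, T x⟫_𝕜 = lam k * ⟪b k, x⟫_𝕜 := by
  conv_lhs => rw [← b.sum_repr' x]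
  simp only [map_sum, map_smul, hT, smul_smul]
  rw [b.orthonormal.inner_right_fintype, mul_comm]

theorem OrthonormalBasis.norm_sub_smul_sq_of_apply_eq_smul
    (hT : ∀ k, T (b k) = (lam k : 𝕜) • b k) (x : E) (t : ℝ) :
    ‖T x - (t : 𝕜) • x‖ ^ 2 = ∑ k, (lam k - t) ^ 2 * ‖⟪b k, x⟫_𝕜‖ ^ 2 := by
  rw [← b.sum_sq_norm_inner_right]
  refine Finset.sum_congr rfl fun k _ => ?_
  rw [inner_sub_right, inner_smul_right, b.inner_apply_of_apply_eq_smul hT, ← sub_mul, norm_mul,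
    mul_pow, ← RCLike.ofReal_sub, RCLike.norm_ofReal, sq_abs]

theorem OrthonormalBasis.mul_norm_le_norm_sub_smul_of_apply_eq_smul
    (hT : ∀ k, T (b k) = (lam k : 𝕜) • b k) {x : E} {t c : ℝ}
    (hc : ∀ k, ⟪b k, x⟫_𝕜 ≠ 0 → c ≤ |lam k - t|) :
    c * ‖x‖ ≤ ‖T x - (t : 𝕜) • x‖ := by
  rcases le_or_gt c 0 with hc0 | hc0
  · exact (mul_nonpos_of_nonpos_of_nonneg hc0 (norm_nonneg x)).trans (norm_nonneg _)
  refine pow_le_pow_iff_left₀ (by positivity) (norm_nonneg _) two_ne_zero |>.mp ?_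
  rw [b.norm_sub_smul_sq_of_apply_eq_smul hT, mul_pow, ← b.sum_sq_norm_inner_right,
    Finset.mul_sum]
  refine Finset.sum_le_sum fun k _ => ?_
  by_cases hk : ⟪b k, x⟫_𝕜 = 0
  · simp [hk]
  · have hsq : c ^ 2 ≤ (lam k - t) ^ 2 := by
      rw [← sq_abs (lam k - t)]
      exact pow_le_pow_left₀ hc0.le (hc k hk) 2
    exact mul_le_mul_of_nonneg_right hsq (by positivity)

theorem OrthonormalBasis.exists_abs_sub_le_of_apply_eq_smul
    (hT : ∀ k, T (b k) = (lam k : 𝕜) • b k) {x : E} (hx : x ≠ 0) {t r : ℝ}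
    (hr : ‖T x - (t : 𝕜) • x‖ ≤ r * ‖x‖) : ∃ k, |lam k - t| ≤ r := by
  have : Nonempty ι := by
    by_contra h
    rw [not_nonempty_iff] at h
    exact hx (by simpa using (b.sum_repr' x).symm)
  obtain ⟨k, -, hk⟩ := Finset.exists_min_image Finset.univ (fun k => |lam k - t|)
    Finset.univ_nonempty
  refine ⟨k, le_of_mul_le_mul_right ?_ (norm_pos_iff.mpr hx)⟩
  exact (b.mul_norm_le_norm_sub_smul_of_apply_eq_smul hT fun l _ =>
    hk l (Finset.mem_univ l)).trans hr

theorem exists_smul_add_smul_ne_zero_inner_eq_zero (u : E) {v₁ v₂ : E} (hv₁ : v₁ ≠ 0)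
    (hv₂ : v₂ ≠ 0) (h12 : ⟪v₁, v₂⟫_𝕜 = 0) :
    ∃ c₁ c₂ : 𝕜, c₁ • v₁ + c₂ • v₂ ≠ 0 ∧ ⟪u, c₁ • v₁ + c₂ • v₂⟫_𝕜 = 0 := by
  by_cases hu₁ : ⟪u, v₁⟫_𝕜 = 0
  · exact ⟨1, 0, by simpa using hv₁, by simpa using hu₁⟩
  refine ⟨⟪u, v₂⟫_𝕜, -⟪u, v₁⟫_𝕜, fun h => ?_, ?_⟩
  · have h21 : ⟪v₂, v₁⟫_𝕜 = 0 := inner_eq_zero_symm.mp h12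
    have := congr_arg (fun w => ⟪v₂, w⟫_𝕜) h
    simp only [inner_add_right, inner_smul_right, h21, inner_zero_right, mul_zero, zero_add,
      mul_eq_zero, neg_eq_zero, inner_self_eq_zero] at this
    tauto
  · simp only [inner_add_right, inner_smul_right]
    ring

theorem OrthonormalBasis.le_abs_sub_add_two_mul_norm_sub
    (hT : ∀ k, T (b k) = (lam k : 𝕜) • b k) {δ : ℝ}
    (hsep : ∀ k l, k ≠ l → δ ≤ |lam k - lam l|) {v₁ v₂ : E} (hv₁ : v₁ ≠ 0) (hv₂ : v₂ ≠ 0)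
    (h12 : ⟪v₁, v₂⟫_𝕜 = 0) {μ₁ μ₂ : ℝ} (hS₁ : S v₁ = (μ₁ : 𝕜) • v₁)
    (hS₂ : S v₂ = (μ₂ : 𝕜) • v₂) :
    δ ≤ |μ₁ - μ₂| + 2 * ‖T - S‖ := by
  have hres : ∀ x, ‖T x - (μ₁ : 𝕜) • x‖ ≤ ‖T - S‖ * ‖x‖ + ‖S x - (μ₁ : 𝕜) • x‖ := fun x =>
    calc ‖T x - (μ₁ : 𝕜) • x‖ = ‖(T - S) x + (S x - (μ₁ : 𝕜) • x)‖ := by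
          rw [_root_.sub_apply, sub_add_sub_cancel]
      _ ≤ ‖T - S‖ * ‖x‖ + ‖S x - (μ₁ : 𝕜) • x‖ :=
          (norm_add_le _ _).trans (add_le_add_left ((T - S).le_opNorm x) _)
  obtain ⟨a, ha⟩ := b.exists_abs_sub_le_of_apply_eq_smul hT hv₁ (t := μ₁)
    (by simpa [hS₁] using hres v₁)
  obtain ⟨c₁, c₂, hw, hwa⟩ := exists_smul_add_smul_ne_zero_inner_eq_zero (b a) hv₁ hv₂ h12
  set w := c₁ • v₁ + c₂ • v₂
  have hSw : ‖S w - (μ₁ : 𝕜) • w‖ ≤ |μ₁ - μ₂| * ‖w‖ := by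
    have hpyth : ‖c₂ • v₂‖ ≤ ‖w‖ := by
      have h := norm_add_sq_eq_norm_sq_add_norm_sq_of_inner_eq_zero (c₁ • v₁) (c₂ • v₂)
        (by rw [inner_smul_left, inner_smul_right, h12, mul_zero, mul_zero])
      nlinarith [norm_nonneg (c₁ • v₁), norm_nonneg (c₂ • v₂), norm_nonneg w]
    calc ‖S w - (μ₁ : 𝕜) • w‖ = ‖((μ₂ - μ₁ : ℝ) : 𝕜) • (c₂ • v₂)‖ := by
          simp only [w, map_add, map_smul, hS₁, hS₂, RCLike.ofReal_sub]
          congr 1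
          module
      _ ≤ |μ₁ - μ₂| * ‖w‖ := by
          rw [norm_smul, RCLike.norm_ofReal, abs_sub_comm]
          exact mul_le_mul_of_nonneg_left hpyth (abs_nonneg _)
  have hlow : (δ - ‖T - S‖) * ‖w‖ ≤ ‖T w - (μ₁ : 𝕜) • w‖ := by
    refine b.mul_norm_le_norm_sub_smul_of_apply_eq_smul hT fun k hk => ?_
    have hka : k ≠ a := by rintro rfl; exact hk hwa
    have := hsep k a hka
    have := abs_sub_le (lam k) μ₁ (lam a)
    rw [abs_sub_comm μ₁] at this
    linarith
  have hw0 : 0 < ‖w‖ := norm_pos_iff.mpr hw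
  nlinarith [hres w]

end Perturbation

namespace Matrix

variable {𝕜 m l : Type*} [RCLike 𝕜] [Fintype m] [Fintype l]

theorem frobenius_norm_sq_eq_re_trace (P : Matrix m l 𝕜) :
    ‖P‖ ^ 2 = RCLike.re (Pᴴ * P).trace := by
  rw [frobenius_norm_def, ← Real.sqrt_eq_rpow, Real.sq_sqrt (by positivity), Finset.sum_comm]
  simp [trace, mul_apply, RCLike.conj_mul]

theorem frobenius_norm_unitary_mul [DecidableEq m] {U : Matrix m m 𝕜}
    (hU : U ∈ unitaryGroup m 𝕜) (P : Matrix m l 𝕜) : ‖U * P‖ = ‖P‖ := by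
  refine (pow_left_inj₀ (norm_nonneg _) (norm_nonneg _) two_ne_zero).mp ?_
  rw [frobenius_norm_sq_eq_re_trace, frobenius_norm_sq_eq_re_trace, conjTranspose_mul,
    Matrix.mul_assoc, ← Matrix.mul_assoc Uᴴ, ← star_eq_conjTranspose,
    mem_unitaryGroup_iff'.mp hU, Matrix.one_mul]

theorem frobenius_norm_mul_unitary [DecidableEq l] {U : Matrix l l 𝕜}
    (hU : U ∈ unitaryGroup l 𝕜) (P : Matrix m l 𝕜) : ‖P * U‖ = ‖P‖ := by
  rw [← frobenius_norm_conjTranspose, conjTranspose_mul, ← star_eq_conjTranspose U,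
    frobenius_norm_unitary_mul (Unitary.star_mem hU), frobenius_norm_conjTranspose]

theorem frobenius_norm_mul_conjTranspose_sub_le (X Y : Matrix m l 𝕜) :
    ‖X * Xᴴ - Y * Yᴴ‖ ≤ (‖X‖ + ‖Y‖) * ‖X - Y‖ :=
  calc ‖X * Xᴴ - Y * Yᴴ‖ = ‖X * (X - Y)ᴴ + (X - Y) * Yᴴ‖ := by
        rw [conjTranspose_sub, Matrix.mul_sub, Matrix.sub_mul, sub_add_sub_cancel]
    _ ≤ ‖X‖ * ‖(X - Y)ᴴ‖ + ‖X - Y‖ * ‖Yᴴ‖ :=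
        (norm_add_le _ _).trans (add_le_add (frobenius_norm_mul _ _) (frobenius_norm_mul _ _))
    _ = (‖X‖ + ‖Y‖) * ‖X - Y‖ := by
        rw [frobenius_norm_conjTranspose, frobenius_norm_conjTranspose]
        ring

theorem norm_toEuclideanCLM_le_frobenius_norm [DecidableEq m] (P : Matrix m m 𝕜) :
    ‖toEuclideanCLM (n := m) (𝕜 := 𝕜) P‖ ≤ ‖P‖ := by
  refine ContinuousLinearMap.opNorm_le_bound _ (norm_nonneg P) fun x => ?_
  rw [← frobenius_norm_replicateCol (ι := Unit), ← frobenius_norm_replicateCol (ι := Unit),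
    ofLp_toEuclideanCLM, replicateCol_mulVec]
  exact frobenius_norm_mul _ _

end Matrix

theorem Matrix.IsHermitian.toEuclideanCLM_eigenvectorBasis {𝕜 m : Type*} [RCLike 𝕜] [Fintype m]
    [DecidableEq m] {M : Matrix m m 𝕜} (hM : M.IsHermitian) (j : m) :
    toEuclideanCLM (n := m) (𝕜 := 𝕜) M (hM.eigenvectorBasis j) =
      (hM.eigenvalues j : 𝕜) • hM.eigenvectorBasis j := by
  apply ofLp_injective
  rw [ofLp_toEuclideanCLM, hM.mulVec_eigenvectorBasis, ofLp_smul,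
    RCLike.real_smul_eq_coe_smul (K := 𝕜)]

section Tensor

variable {n : ℕ}

theorem tensorFrob_eq_norm_flattenMode (d : Fin 3) (X : Fin n → Fin n → Fin n → ℂ) :
    tensorFrob X = ‖flattenMode d X‖ := by
  rw [tensorFrob, frobenius_norm_def, ← Real.sqrt_eq_rpow]
  congr 1
  fin_cases d <;> simp only [flattenMode, of_apply, Fintype.sum_prod_type, Real.rpow_two]
  · exact Finset.sum_comm
  · conv_rhs => rw [Finset.sum_comm]
    exact Finset.sum_congr rfl fun _ _ => Finset.sum_comm

theorem flattenMode_sub (d : Fin 3) (X Y : Fin n → Fin n → Fin n → ℂ) :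
    flattenMode d (X - Y) = flattenMode d X - flattenMode d Y := by
  fin_cases d <;> rfl

theorem exists_flattenMode_tensorAct {L R T : Matrix (Fin n) (Fin n) ℂ}
    (hL : L ∈ unitaryGroup (Fin n) ℂ) (hR : R ∈ unitaryGroup (Fin n) ℂ)
    (hT : T ∈ unitaryGroup (Fin n) ℂ) (d : Fin 3) :
    ∃ U ∈ unitaryGroup (Fin n) ℂ, ∃ Q ∈ unitaryGroup (Fin n × Fin n) ℂ,
      ∀ X, flattenMode d (tensorAct L R T X) = U * flattenMode d X * Q := by
  have hkron {V W : Matrix (Fin n) (Fin n) ℂ} (hV : V ∈ unitaryGroup (Fin n) ℂ)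
      (hW : W ∈ unitaryGroup (Fin n) ℂ) : (V ⊗ₖ W)ᵀ ∈ unitaryGroup (Fin n × Fin n) ℂ :=
    transpose_mem_unitaryGroup_iff.mpr (kronecker_mem_unitary hV hW)
  fin_cases d
  · refine ⟨L, hL, _, hkron hR hT, fun X => ?_⟩
    ext i ⟨j, k⟩
    simp only [flattenMode, tensorAct, mul_apply, transpose_apply, kronecker_apply, of_apply,
      Fintype.sum_prod_type, Finset.sum_mul]
    rw [Finset.sum_comm]
    refine Finset.sum_congr rfl fun q _ => ?_
    rw [Finset.sum_comm]
    exact Finset.sum_congr rfl fun r _ => Finset.sum_congr rfl fun p _ => by ring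
  · refine ⟨R, hR, _, hkron hL hT, fun X => ?_⟩
    ext j ⟨i, k⟩
    simp only [flattenMode, tensorAct, mul_apply, transpose_apply, kronecker_apply, of_apply,
      Fintype.sum_prod_type, Finset.sum_mul]
    refine Finset.sum_congr rfl fun p _ => ?_
    rw [Finset.sum_comm]
    exact Finset.sum_congr rfl fun r _ => Finset.sum_congr rfl fun q _ => by ring
  · refine ⟨T, hT, _, hkron hL hR, fun X => ?_⟩
    ext k ⟨i, j⟩
    simp only [flattenMode, tensorAct, mul_apply, transpose_apply, kronecker_apply, of_apply,
      Fintype.sum_prod_type, Finset.sum_mul]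
    exact Finset.sum_congr rfl fun p _ => Finset.sum_congr rfl fun q _ =>
      Finset.sum_congr rfl fun r _ => by ring

theorem exists_gramMode_tensorAct {L R T : Matrix (Fin n) (Fin n) ℂ}
    (hL : L ∈ unitaryGroup (Fin n) ℂ) (hR : R ∈ unitaryGroup (Fin n) ℂ)
    (hT : T ∈ unitaryGroup (Fin n) ℂ) (d : Fin 3) :
    ∃ U ∈ unitaryGroup (Fin n) ℂ, ∀ X, gramMode d (tensorAct L R T X) = U * gramMode d X * star U ∧
      tensorFrob (tensorAct L R T X) = tensorFrob X := by
  obtain ⟨U, hU, Q, hQ, hflat⟩ := exists_flattenMode_tensorAct hL hR hT d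
  refine ⟨U, hU, fun X => ⟨?_, ?_⟩⟩
  · rw [gramMode, gramMode, hflat, conjTranspose_mul, conjTranspose_mul,
      ← star_eq_conjTranspose Q, ← star_eq_conjTranspose U]
    simp only [Matrix.mul_assoc]
    rw [← Matrix.mul_assoc Q, mem_unitaryGroup_iff.mp hQ, Matrix.one_mul]
  · rw [tensorFrob_eq_norm_flattenMode d, tensorFrob_eq_norm_flattenMode d, hflat,
      frobenius_norm_mul_unitary hQ, frobenius_norm_unitary_mul hU]

end Tensor

theorem le_abs_sub_eigenvalues_add_two_mul_tensorFrob {n : ℕ} {A B : Fin n → Fin n → Fin n → ℂ}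
    {d : Fin 3} (hHA : (gramMode d A).IsHermitian) (hHB : (gramMode d B).IsHermitian) {δ : ℝ}
    (hsep : ∀ k l : Fin n, k ≠ l → δ ≤ |hHA.eigenvalues k - hHA.eigenvalues l|)
    {i j : Fin n} (hij : i ≠ j) {L R T : Matrix (Fin n) (Fin n) ℂ}
    (hL : L ∈ unitaryGroup (Fin n) ℂ) (hR : R ∈ unitaryGroup (Fin n) ℂ)
    (hT : T ∈ unitaryGroup (Fin n) ℂ) :
    δ ≤ |hHB.eigenvalues i - hHB.eigenvalues j| +
      2 * ((tensorFrob A + tensorFrob B) * tensorFrob (tensorAct L R T A - B)) := by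
  obtain ⟨U, hU, hact⟩ := exists_gramMode_tensorAct hL hR hT d
  set Φ := toEuclideanCLM (n := Fin n) (𝕜 := ℂ)
  have hΦU : Φ (star U) ∈ unitary (EuclideanSpace ℂ (Fin n) →L[ℂ] EuclideanSpace ℂ (Fin n)) :=
    Unitary.map_mem Φ (Unitary.star_mem hU)
  have hconj (M : Matrix (Fin n) (Fin n) ℂ) (v : EuclideanSpace ℂ (Fin n)) :
      Φ (star U * M * U) (Φ (star U) v) = Φ (star U) (Φ M v) := by
    rw [← mul_apply_eq_comp, ← map_mul, Matrix.mul_assoc, Matrix.mul_assoc,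
      mem_unitaryGroup_iff.mp hU, Matrix.mul_one, map_mul, mul_apply_eq_comp]
  set b := hHB.eigenvectorBasis
  have hb (k : Fin n) : Φ (star U) (b k) ≠ 0 := by
    rw [← norm_ne_zero_iff, ContinuousLinearMap.norm_map_of_mem_unitary hΦU, b.orthonormal.1 k]
    exact one_ne_zero
  have hdist : ‖Φ (gramMode d A) - Φ (star U * gramMode d B * U)‖ ≤
      (tensorFrob A + tensorFrob B) * tensorFrob (tensorAct L R T A - B) :=
    calc ‖Φ (gramMode d A) - Φ (star U * gramMode d B * U)‖
        ≤ ‖gramMode d A - star U * gramMode d B * U‖ := by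
          rw [← map_sub]
          exact norm_toEuclideanCLM_le_frobenius_norm _
      _ = ‖U * (gramMode d A - star U * gramMode d B * U) * star U‖ := by
          rw [frobenius_norm_mul_unitary (Unitary.star_mem hU), frobenius_norm_unitary_mul hU]
      _ = ‖gramMode d (tensorAct L R T A) - gramMode d B‖ := by
          have hUU : U * star U = 1 := mem_unitaryGroup_iff.mp hU
          rw [(hact A).1, Matrix.mul_sub, Matrix.sub_mul]
          simp only [Matrix.mul_assoc, hUU, Matrix.mul_one]
          rw [← Matrix.mul_assoc U (star U), hUU, Matrix.one_mul]
      _ ≤ (tensorFrob A + tensorFrob B) * tensorFrob (tensorAct L R T A - B) := by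
          rw [← (hact A).2, tensorFrob_eq_norm_flattenMode d (tensorAct L R T A),
            tensorFrob_eq_norm_flattenMode d B, tensorFrob_eq_norm_flattenMode d (_ - B),
            flattenMode_sub]
          exact frobenius_norm_mul_conjTranspose_sub_le _ _
  have := hHA.eigenvectorBasis.le_abs_sub_add_two_mul_norm_sub
    hHA.toEuclideanCLM_eigenvectorBasis hsep (hb i) (hb j)
    (by rw [ContinuousLinearMap.inner_map_map_of_mem_unitary hΦU]; exact b.orthonormal.2 hij)
    (by rw [hconj, hHB.toEuclideanCLM_eigenvectorBasis, map_smul])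
    (by rw [hconj, hHB.toEuclideanCLM_eigenvectorBasis, map_smul])
  linarith

theorem orbit_distance_gap_lower_bound_general {n : ℕ}
    (A B : Fin n → Fin n → Fin n → ℂ)
    (ε δ : ℝ) (hε : 0 < ε)
    (d : Fin 3)
    (hHA : (gramMode d A).IsHermitian) (hHB : (gramMode d B).IsHermitian)
    (hgapA : ∀ i j : Fin n, i ≠ j → |hHA.eigenvalues i - hHA.eigenvalues j| ≥ δ)
    (hgapB : ∃ i j : Fin n, i ≠ j ∧ |hHB.eigenvalues i - hHB.eigenvalues j| < δ - 2 * ε) :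
    unitaryOrbitDist A B > ε / (tensorFrob A + tensorFrob B) := by
  obtain ⟨i, j, hij, hgapB⟩ := hgapB
  set g := |hHB.eigenvalues i - hHB.eigenvalues j|
  set S := tensorFrob A + tensorFrob B
  have hbound {L R T : Matrix (Fin n) (Fin n) ℂ} (hL : L ∈ unitaryGroup (Fin n) ℂ)
      (hR : R ∈ unitaryGroup (Fin n) ℂ) (hT : T ∈ unitaryGroup (Fin n) ℂ) :
      δ - g ≤ 2 * (S * tensorFrob (tensorAct L R T A - B)) := by
    linarith [le_abs_sub_eigenvalues_add_two_mul_tensorFrob hHA hHB hgapA hij hL hR hT]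
  have hS : 0 < S := by
    have h1 := hbound (one_mem _) (one_mem _) (one_mem _)
    have hr : 0 ≤ tensorFrob (tensorAct 1 1 1 A - B) := Real.sqrt_nonneg _
    have hS0 : 0 ≤ S := add_nonneg (Real.sqrt_nonneg _) (Real.sqrt_nonneg _)
    rcases hS0.lt_or_eq with hpos | hzero
    · exact hpos
    · rw [← hzero] at h1
      linarith
  have hlow : (δ - g) / (2 * S) ≤ unitaryOrbitDist A B := by
    refine le_csInf ⟨_, 1, 1, 1, one_mem _, one_mem _, one_mem _, rfl⟩ ?_
    rintro _ ⟨L, R, T, hL, hR, hT, rfl⟩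
    rw [div_le_iff₀ (by positivity)]
    linarith [hbound hL hR hT]
  calc ε / S < (δ - g) / (2 * S) := by
        rw [div_lt_div_iff₀ hS (by positivity)]
        nlinarith
    _ ≤ unitaryOrbitDist A B := hlow

/-- If for some mode `d` the Gram matrix of `B` has two eigenvalues at distance `< δ - 2ε`
while all distinct eigenvalues of the Gram matrix of `A` are `≥ δ` apart, then the unitary
orbit distance satisfies `dist_ℂ(A,B) > ε / (‖A‖_F + ‖B‖_F)`. -/
theorem orbit_distance_gap_lower_bound {n : ℕ}
    (A B : Fin n → Fin n → Fin n → ℂ)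
    (ε δ : ℝ) (hε : 0 < ε) (hδ : 0 < δ)
    (d : Fin 3)
    (hHA : (gramMode d A).IsHermitian) (hHB : (gramMode d B).IsHermitian)
    (hgapA : ∀ i j : Fin n, i ≠ j → |hHA.eigenvalues i - hHA.eigenvalues j| ≥ δ)
    (hgapB : ∃ i j : Fin n, i ≠ j ∧ |hHB.eigenvalues i - hHB.eigenvalues j| < δ - 2 * ε) :
    unitaryOrbitDist A B > ε / (tensorFrob A + tensorFrob B) :=
  orbit_distance_gap_lower_bound_general A B ε δ hε d hHA hHB hgapA hgapB
end

section
/- Let X be a random vector in ℝⁿ with independent coordinates, and suppose there exist ε > 0 and p ∈ (0,1) such that the Lévy concentration function satisfies 𝓛(X_i, ε) ≤ p for every coordinate i. Then there exist ε' > 0 and p' ∈ (0,1), depending only on ε and p, such that 𝓛(X, ε'√n) ≤ (p')ⁿ, where 𝓛(X, t) = sup_{a∈ℝⁿ} P(‖X − a‖ ≤ t). -/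
/-!
Chernoff's bound with a negative exponent. A coordinate with `𝓛(X_i, ε) ≤ p` has
`E exp(-t (X_i - a_i)²) ≤ p + exp(-t ε²)`, which is some `q < 1` once `t` is large. By independence
the moment generating function of `‖X - a‖²` at `-t` is at most `qⁿ`, so
`P(‖X - a‖² ≤ ε'² n) ≤ (exp(t ε'²) q)ⁿ`, and `exp(t ε'²) q < 1` for small `ε'`.
-/

open MeasureTheory ProbabilityTheory Filter Topology

lemma exists_pos_add_exp_neg_mul_lt_one {p c : ℝ} (hp : p < 1) (hc : 0 < c) :
    ∃ t, 0 < t ∧ p + Real.exp (-t * c) < 1 := by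
  have hlim : Tendsto (fun t => Real.exp (-t * c)) atTop (𝓝 0) := by
    simpa only [neg_mul, Function.comp_def] using Real.tendsto_exp_neg_atTop_nhds_zero.comp
      (tendsto_id.atTop_mul_const hc : Tendsto (fun t => t * c) atTop atTop)
  obtain ⟨t, hlt, ht⟩ :=
    ((hlim.eventually (gt_mem_nhds (sub_pos.2 hp))).and (eventually_gt_atTop 0)).exists
  exact ⟨t, ht, by linarith⟩

lemma exists_pos_exp_mul_sq_mul_lt_one (t : ℝ) {q : ℝ} (hq : q < 1) :
    ∃ r, 0 < r ∧ Real.exp (t * r ^ 2) * q < 1 := by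
  have hcont : ContinuousAt (fun r : ℝ => Real.exp (t * r ^ 2) * q) 0 := by fun_prop
  have hnear := hcont.eventually_lt continuousAt_const (by simpa using hq)
  obtain ⟨r, hr, hpos⟩ := ((hnear.filter_mono nhdsWithin_le_nhds).and
    (self_mem_nhdsWithin : Set.Ioi (0 : ℝ) ∈ 𝓝[>] 0)).exists
  exact ⟨r, hpos, hr⟩

section Chernoff

variable {Ω : Type*} [MeasurableSpace Ω] {μ : Measure Ω}

lemma integrable_exp_neg_mul_of_nonneg [IsFiniteMeasure μ] {Y : Ω → ℝ} (hY : Measurable Y)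
    (hY0 : ∀ ω, 0 ≤ Y ω) {t : ℝ} (ht : 0 ≤ t) :
    Integrable (fun ω => Real.exp (-t * Y ω)) μ := by
  refine .of_bound (hY.const_mul (-t)).exp.aestronglyMeasurable 1 (ae_of_all _ fun ω => ?_)
  rw [Real.norm_of_nonneg (Real.exp_pos _).le, Real.exp_le_one_iff]
  nlinarith [hY0 ω]

lemma mgf_neg_le_measureReal_add_exp [IsProbabilityMeasure μ] {Y : Ω → ℝ} (hY : Measurable Y)
    (hY0 : ∀ ω, 0 ≤ Y ω) {t : ℝ} (ht : 0 ≤ t) (s : ℝ) :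
    mgf Y μ (-t) ≤ μ.real {ω | Y ω ≤ s} + Real.exp (-t * s) := by
  set A := {ω | Y ω ≤ s}
  have hA : MeasurableSet A := measurableSet_le hY measurable_const
  have hpointwise : ∀ ω, Real.exp (-t * Y ω) ≤ A.indicator (fun _ => 1) ω + Real.exp (-t * s) := by
    intro ω
    by_cases hω : ω ∈ A
    · rw [Set.indicator_of_mem hω]
      have : Real.exp (-t * Y ω) ≤ 1 := Real.exp_le_one_iff.2 (by nlinarith [hY0 ω])
      linarith [Real.exp_pos (-t * s)]
    · rw [Set.indicator_of_notMem hω, zero_add]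
      have : s < Y ω := not_le.1 hω
      exact Real.exp_le_exp.2 (by nlinarith)
  calc mgf Y μ (-t) = ∫ ω, Real.exp (-t * Y ω) ∂μ := rfl
    _ ≤ ∫ ω, (A.indicator (fun _ => 1) ω + Real.exp (-t * s)) ∂μ :=
        integral_mono (integrable_exp_neg_mul_of_nonneg hY hY0 ht)
          (((integrable_const 1).indicator hA).add (integrable_const _)) hpointwise
    _ = μ.real A + Real.exp (-t * s) := by
        rw [integral_add ((integrable_const 1).indicator hA) (integrable_const _),
          integral_indicator_const _ hA, integral_const, smul_eq_mul, mul_one, probReal_univ,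
          one_smul]

lemma measureReal_sum_le_le_exp_mul_pow [IsFiniteMeasure μ] {ι : Type*} [Fintype ι]
    {Y : ι → Ω → ℝ} (hY : ∀ i, Measurable (Y i)) (hY0 : ∀ i ω, 0 ≤ Y i ω)
    (hindep : iIndepFun Y μ) {t q : ℝ} (ht : 0 ≤ t) (hq : ∀ i, mgf (Y i) μ (-t) ≤ q) (s : ℝ) :
    μ.real {ω | ∑ i, Y i ω ≤ s} ≤ Real.exp (t * s) * q ^ Fintype.card ι := by
  have hsum : (fun ω => ∑ i, Y i ω) = ∑ i, Y i := by ext ω; simp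
  have hmgf : mgf (fun ω => ∑ i, Y i ω) μ (-t) ≤ q ^ Fintype.card ι := by
    rw [hsum, hindep.mgf_sum hY, ← Finset.card_univ, ← Finset.prod_const]
    exact Finset.prod_le_prod (fun i _ => mgf_nonneg) (fun i _ => hq i)
  calc μ.real {ω | ∑ i, Y i ω ≤ s}
      ≤ Real.exp (-(-t) * s) * mgf (fun ω => ∑ i, Y i ω) μ (-t) :=
        measure_le_le_exp_mul_mgf s (neg_nonpos.2 ht) (integrable_exp_neg_mul_of_nonneg
          (Finset.measurable_sum _ fun i _ => hY i) (fun ω => Finset.sum_nonneg fun i _ => hY0 i ω) ht)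
    _ ≤ Real.exp (t * s) * q ^ Fintype.card ι := by
        rw [neg_neg]; exact mul_le_mul_of_nonneg_left hmgf (Real.exp_pos _).le

end Chernoff

/-- Tensorization of the Lévy concentration function: if each coordinate of a random
vector with independent coordinates satisfies `𝓛(X_i, ε) ≤ p < 1`, then there are
`ε' > 0` and `p' < 1`, depending only on `ε` and `p`, with `𝓛(X, ε'√n) ≤ (p')ⁿ`. -/
theorem levy_tensorization (ε p : ℝ) (hε : 0 < ε) (hp : p ∈ Set.Ioo (0 : ℝ) 1) :
    ∃ ε' p' : ℝ, 0 < ε' ∧ p' ∈ Set.Ioo (0 : ℝ) 1 ∧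
      ∀ (n : ℕ) (Ω : Type) (_ : MeasurableSpace Ω) (μ : Measure Ω),
        IsProbabilityMeasure μ →
        ∀ X : Ω → Fin n → ℝ,
          (∀ i, Measurable fun ω => X ω i) →
          iIndepFun (m := fun _ : Fin n => (inferInstance : MeasurableSpace ℝ))
            (fun i ω => X ω i) μ →
          (∀ i, ∀ a : ℝ, μ {ω | |X ω i - a| ≤ ε} ≤ ENNReal.ofReal p) →
          ∀ a : Fin n → ℝ,
            μ {ω | Real.sqrt (∑ i, (X ω i - a i) ^ 2) ≤ ε' * Real.sqrt n} ≤
              ENNReal.ofReal (p' ^ n) := by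
  obtain ⟨hp0, hp1⟩ := hp
  obtain ⟨t, ht, hq⟩ := exists_pos_add_exp_neg_mul_lt_one hp1 (pow_pos hε 2)
  set q := p + Real.exp (-t * ε ^ 2)
  obtain ⟨ε', hε', hp'⟩ := exists_pos_exp_mul_sq_mul_lt_one t hq
  refine ⟨ε', Real.exp (t * ε' ^ 2) * q, hε', ⟨by positivity, hp'⟩, ?_⟩
  intro n Ω _ μ _ X hX hindep hsmall a
  have hY : ∀ i, Measurable fun ω => (X ω i - a i) ^ 2 :=
    fun i => ((hX i).sub measurable_const).pow_const 2
  have hmgf : ∀ i, mgf (fun ω => (X ω i - a i) ^ 2) μ (-t) ≤ q := by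
    intro i
    have hball : {ω | (X ω i - a i) ^ 2 ≤ ε ^ 2} = {ω | |X ω i - a i| ≤ ε} := by
      ext ω; simp only [Set.mem_ofPred_eq, sq_le_sq, abs_of_pos hε]
    have hcoord := mgf_neg_le_measureReal_add_exp (μ := μ) (hY i) (fun ω => sq_nonneg _) ht.le (ε ^ 2)
    rw [hball] at hcoord
    exact hcoord.trans (add_le_add_left (ENNReal.toReal_le_of_le_ofReal hp0.le (hsmall i (a i))) _)
  have hevent : {ω | Real.sqrt (∑ i, (X ω i - a i) ^ 2) ≤ ε' * Real.sqrt n} =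
      {ω | ∑ i, (X ω i - a i) ^ 2 ≤ ε' ^ 2 * n} := by
    ext ω
    simp only [Set.mem_ofPred_eq, Real.sqrt_le_iff, mul_pow, Real.sq_sqrt (Nat.cast_nonneg n)]
    exact and_iff_right (by positivity)
  have hchernoff := measureReal_sum_le_le_exp_mul_pow hY (fun i ω => sq_nonneg _)
    (hindep.comp (fun i x => (x - a i) ^ 2) fun i => (measurable_id.sub measurable_const).pow_const 2)
    ht.le hmgf (ε' ^ 2 * n)
  rw [hevent, ← ofReal_measureReal, mul_pow, ← Real.exp_nat_mul, mul_comm (n : ℝ), mul_assoc]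
  exact ENNReal.ofReal_le_ofReal (by simpa only [Fintype.card_fin] using hchernoff)
end

section
/- Let M be an n×p real matrix (n ≥ p), decomposed as M = (X | Y) with X of size n×q and Y of size n×(p−q). For any unit vector u₀ ∈ ℝᵖ supported on the first q coordinates, writing u₀' for its first q coordinates, and for any σ ∈ ℝ: ‖MᵀMu₀ − σ²u₀‖ ≥ ‖YᵀXu₀'‖ ≥ s_min(X)·s_min(YᵀU), where U is any n×q matrix whose columns form an orthonormal basis of the column span of X (assuming X has full column rank). -/
open Matrix

/-- Euclidean norm of a finitely-indexed real vector. -/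
noncomputable def enorm' {ι : Type*} [Fintype ι] (v : ι → ℝ) : ℝ :=
  Real.sqrt (∑ i, v i ^ 2)

/-- Smallest singular value of a matrix, as the infimum of `‖A v‖` over unit vectors `v`. -/
noncomputable def smin {ι κ : Type*} [Fintype ι] [Fintype κ] (A : Matrix ι κ ℝ) : ℝ :=
  sInf {r : ℝ | ∃ v : κ → ℝ, ∑ t, v t ^ 2 = 1 ∧ r = enorm' (A.mulVec v)}

/-! The first inequality only looks at the last `p - q` coordinates of `MᵀMu₀ - σ²u₀`, which
equal `YᵀXu₀'` because `Mu₀ = Xu₀'`. For the second, write `Xu₀' = Uw`; orthonormality of the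
columns of `U` gives `‖w‖ = ‖Xu₀'‖ ≥ s_min(X)`, and `‖YᵀXu₀'‖ = ‖(YᵀU)w‖ ≥ s_min(YᵀU)‖w‖`. -/

section Norm

variable {ι κ : Type*} [Fintype ι] [Fintype κ]

lemma enorm'_nonneg (v : ι → ℝ) : 0 ≤ enorm' v :=
  Real.sqrt_nonneg _

lemma enorm'_smul (c : ℝ) (v : ι → ℝ) : enorm' (c • v) = |c| * enorm' v := by
  have hsum : ∑ i, (c • v) i ^ 2 = c ^ 2 * ∑ i, v i ^ 2 := by
    simp only [Pi.smul_apply, smul_eq_mul, mul_pow, Finset.mul_sum]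
  rw [enorm', hsum, Real.sqrt_mul (sq_nonneg c), Real.sqrt_sq_eq_abs, enorm']

lemma enorm'_eq_zero_iff {v : ι → ℝ} : enorm' v = 0 ↔ v = 0 := by
  rw [enorm', Real.sqrt_eq_zero (Finset.sum_nonneg fun i _ => sq_nonneg (v i)),
    Finset.sum_eq_zero_iff_of_nonneg fun i _ => sq_nonneg (v i), funext_iff]
  simp

lemma enorm'_comp_inr_le (v : ι ⊕ κ → ℝ) : enorm' (v ∘ Sum.inr) ≤ enorm' v := by
  refine Real.sqrt_le_sqrt ?_
  rw [Fintype.sum_sum_type]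
  exact le_add_of_nonneg_left (Finset.sum_nonneg fun i _ => sq_nonneg _)

lemma enorm'_mulVec_of_transpose_mul_self_eq_one [DecidableEq κ] {U : Matrix ι κ ℝ}
    (hU : Uᵀ * U = 1) (w : κ → ℝ) : enorm' (U *ᵥ w) = enorm' w := by
  have hdot : (U *ᵥ w) ⬝ᵥ (U *ᵥ w) = w ⬝ᵥ w := by
    rw [dotProduct_mulVec, ← mulVec_transpose, mulVec_mulVec, hU, one_mulVec]
  simpa only [enorm', dotProduct, sq] using congrArg Real.sqrt hdot

end Norm

section SmallestSingularValue

variable {ι κ : Type*} [Fintype ι] [Fintype κ]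

lemma smin_nonneg (A : Matrix ι κ ℝ) : 0 ≤ smin A :=
  Real.sInf_nonneg (by rintro x ⟨v, -, rfl⟩; exact enorm'_nonneg _)

lemma smin_le (A : Matrix ι κ ℝ) {v : κ → ℝ} (hv : ∑ t, v t ^ 2 = 1) :
    smin A ≤ enorm' (A *ᵥ v) :=
  csInf_le ⟨0, by rintro x ⟨w, -, rfl⟩; exact enorm'_nonneg _⟩ ⟨v, hv, rfl⟩

lemma smin_mul_enorm'_le (A : Matrix ι κ ℝ) (v : κ → ℝ) :
    smin A * enorm' v ≤ enorm' (A *ᵥ v) := by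
  rcases eq_or_ne v 0 with rfl | hv
  · simp [enorm']
  have hpos : 0 < enorm' v := (enorm'_nonneg v).lt_of_ne' (enorm'_eq_zero_iff.not.mpr hv)
  have hunit : ∑ t, ((enorm' v)⁻¹ • v) t ^ 2 = 1 := by
    have := congrArg (· ^ 2) (enorm'_smul (enorm' v)⁻¹ v)
    simp only [abs_inv, abs_of_pos hpos, inv_mul_cancel₀ hpos.ne', one_pow] at this
    rwa [enorm', Real.sq_sqrt (Finset.sum_nonneg fun t _ => sq_nonneg _)] at this
  have hle := smin_le A hunit
  rw [mulVec_smul, enorm'_smul, abs_inv, abs_of_pos hpos, ← div_eq_inv_mul,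
    le_div_iff₀ hpos] at hle
  exact hle

end SmallestSingularValue

section ColumnSplit

variable {m ι κ : Type*}

lemma transpose_mulVec_comp_inr [Fintype m] (M : Matrix m (ι ⊕ κ) ℝ) (w : m → ℝ) :
    (Mᵀ *ᵥ w) ∘ Sum.inr = (M.submatrix id Sum.inr)ᵀ *ᵥ w := by
  ext j
  simp [mulVec, dotProduct]

variable [Fintype ι] [Fintype κ]

lemma mulVec_eq_submatrix_inl_mulVec (M : Matrix m (ι ⊕ κ) ℝ) {v : ι ⊕ κ → ℝ}
    (hv : ∀ t, v (Sum.inr t) = 0) : M *ᵥ v = M.submatrix id Sum.inl *ᵥ (v ∘ Sum.inl) := by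
  ext i
  simp [mulVec, dotProduct, Fintype.sum_sum_type, hv]

lemma sum_sq_comp_inl_of_inr_eq_zero {v : ι ⊕ κ → ℝ} (hv : ∀ t, v (Sum.inr t) = 0) :
    ∑ t, (v ∘ Sum.inl) t ^ 2 = ∑ t, v t ^ 2 := by
  simp [Fintype.sum_sum_type, hv]

end ColumnSplit

theorem column_split_lower_bound_general (n q r : ℕ)
    (M : Matrix (Fin n) (Fin q ⊕ Fin r) ℝ)
    (X : Matrix (Fin n) (Fin q) ℝ) (Y : Matrix (Fin n) (Fin r) ℝ)
    (hX : X = M.submatrix id Sum.inl) (hY : Y = M.submatrix id Sum.inr)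
    (u₀ : Fin q ⊕ Fin r → ℝ)
    (hu₀unit : ∑ t, u₀ t ^ 2 = 1)
    (hu₀supp : ∀ t, u₀ (Sum.inr t) = 0)
    (u₀' : Fin q → ℝ) (hu₀' : u₀' = fun t => u₀ (Sum.inl t))
    (σ : ℝ)
    (U : Matrix (Fin n) (Fin q) ℝ)
    (hUorth : Uᵀ * U = 1)
    (hUspan : Set.range U.mulVec = Set.range X.mulVec) :
    enorm' ((Mᵀ * M).mulVec u₀ - σ ^ 2 • u₀) ≥ enorm' (Yᵀ.mulVec (X.mulVec u₀')) ∧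
      enorm' (Yᵀ.mulVec (X.mulVec u₀')) ≥ smin X * smin (Yᵀ * U) := by
  have hu₀' : u₀' = u₀ ∘ Sum.inl := hu₀'
  have hMu : M *ᵥ u₀ = X *ᵥ u₀' := by
    rw [hX, hu₀', mulVec_eq_submatrix_inl_mulVec M hu₀supp]
  have hinr : ((Mᵀ * M) *ᵥ u₀ - σ ^ 2 • u₀) ∘ Sum.inr = Yᵀ *ᵥ (X *ᵥ u₀') := by
    have hzero : (σ ^ 2 • u₀) ∘ Sum.inr = 0 := funext fun t => by simp [hu₀supp]
    rw [Pi.sub_comp, hzero, sub_zero, ← mulVec_mulVec, hMu, transpose_mulVec_comp_inr, hY]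
  refine ⟨hinr ▸ enorm'_comp_inr_le _, ?_⟩
  obtain ⟨w, hw⟩ : X *ᵥ u₀' ∈ Set.range U.mulVec := hUspan ▸ ⟨u₀', rfl⟩
  have hXu₀' : smin X ≤ enorm' w := by
    rw [← enorm'_mulVec_of_transpose_mul_self_eq_one hUorth w, hw]
    exact smin_le X (hu₀' ▸ (sum_sq_comp_inl_of_inr_eq_zero hu₀supp).trans hu₀unit)
  calc smin X * smin (Yᵀ * U) ≤ smin (Yᵀ * U) * enorm' w := by
        rw [mul_comm]; exact mul_le_mul_of_nonneg_left hXu₀' (smin_nonneg _)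
    _ ≤ enorm' ((Yᵀ * U) *ᵥ w) := smin_mul_enorm'_le _ w
    _ = enorm' (Yᵀ *ᵥ (X *ᵥ u₀')) := by rw [← mulVec_mulVec, hw]

/-- Column-decomposition lower bound: writing `M = (X | Y)` and taking a unit vector `u₀`
supported on the `X`-columns with upper part `u₀'`, for any `σ`,
`‖MᵀMu₀ - σ²u₀‖ ≥ ‖Yᵀ X u₀'‖ ≥ s_min(X) · s_min(Yᵀ U)`, where the columns of `U` form an
orthonormal basis of the column span of the (full-column-rank) matrix `X`. -/
theorem column_split_lower_bound (n q r : ℕ)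
    (M : Matrix (Fin n) (Fin q ⊕ Fin r) ℝ)
    (X : Matrix (Fin n) (Fin q) ℝ) (Y : Matrix (Fin n) (Fin r) ℝ)
    (hX : X = M.submatrix id Sum.inl) (hY : Y = M.submatrix id Sum.inr)
    (u₀ : Fin q ⊕ Fin r → ℝ)
    (hu₀unit : ∑ t, u₀ t ^ 2 = 1)
    (hu₀supp : ∀ t, u₀ (Sum.inr t) = 0)
    (u₀' : Fin q → ℝ) (hu₀' : u₀' = fun t => u₀ (Sum.inl t))
    (σ : ℝ)
    (U : Matrix (Fin n) (Fin q) ℝ)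
    (hUorth : Uᵀ * U = 1)
    (hUspan : Set.range U.mulVec = Set.range X.mulVec)
    (hXrank : Function.Injective X.mulVec) :
    enorm' ((Mᵀ * M).mulVec u₀ - σ ^ 2 • u₀) ≥ enorm' (Yᵀ.mulVec (X.mulVec u₀')) ∧
      enorm' (Yᵀ.mulVec (X.mulVec u₀')) ≥ smin X * smin (Yᵀ * U) :=
  column_split_lower_bound_general n q r M X Y hX hY u₀ hu₀unit hu₀supp u₀' hu₀' σ U hUorth hUspan
end

section
/- Let M be an n×p matrix (p ≥ 2) and let M' be the n×(p−1) matrix obtained by deleting the last column X of M. Let u = (u', b) be a unit right singular vector of M for singular value σ_i(M), split into its first p−1 coordinates u' and last coordinate b. Let û be a unit right singular vector and ŵ the corresponding unit left singular vector of M' for σ_i(M'), with σ_i(M') ≠ 0. Then |ŵᵀX| ≤ |σ_i(M')² − σ_i(M)²| / (|b|·σ_i(M')), provided b ≠ 0. -/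
/-!
Write `u = (u', b)` and `X` for the deleted column, so that `M u = M' u' + b X`. The first `p`
rows of `MᵀM u = σ² u` read `M'ᵀ(M' u' + b X) = σ² u'`. Pairing with `û` and moving `M'ᵀ` across,
`M' û = σ' ŵ` and the symmetry of `M'ᵀM'` give `(σ² - σ'²) ûᵀu' = b σ' ŵᵀX`; Cauchy–Schwarz bounds
`|ûᵀu'|` by `1`.
-/

open Matrix

namespace Matrix

variable {R : Type*}

theorem mulVec_eq_submatrix_castSucc_mulVec_add [CommSemiring R] {m : Type*} {p : ℕ}
    (M : Matrix m (Fin (p + 1)) R) (u : Fin (p + 1) → R) :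
    M *ᵥ u = M.submatrix id Fin.castSucc *ᵥ (u ∘ Fin.castSucc)
      + u (Fin.last p) • fun i => M i (Fin.last p) := by
  ext i
  simp only [mulVec, dotProduct, Fin.sum_univ_castSucc, Pi.add_apply, Pi.smul_apply,
    smul_eq_mul, submatrix_apply, id, Function.comp_apply]
  ring

theorem transpose_submatrix_castSucc_mulVec [CommSemiring R] {m : Type*} [Fintype m] {p : ℕ}
    (M : Matrix m (Fin (p + 1)) R) (v : m → R) :
    (M.submatrix id Fin.castSucc)ᵀ *ᵥ v = (Mᵀ *ᵥ v) ∘ Fin.castSucc :=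
  rfl

theorem sub_mul_dotProduct_eq_of_transpose_mulVec_add [CommRing R] {m k : Type*} [Fintype m]
    [Fintype k] {A : Matrix m k R} {x y : k → R} {X w : m → R} {b c s t : R}
    (hx : Aᵀ *ᵥ (A *ᵥ x + b • X) = s • x) (hy : (Aᵀ * A) *ᵥ y = t • y) (hw : A *ᵥ y = c • w) :
    (s - t) * (y ⬝ᵥ x) = b * c * (w ⬝ᵥ X) := by
  rw [sub_mul, sub_eq_iff_eq_add']
  have hgram : A *ᵥ y ⬝ᵥ A *ᵥ x = t * (y ⬝ᵥ x) :=
    calc A *ᵥ y ⬝ᵥ A *ᵥ x = x ⬝ᵥ Aᵀ *ᵥ (A *ᵥ y) := by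
          rw [dotProduct_mulVec x, vecMul_transpose, dotProduct_comm]
      _ = t * (y ⬝ᵥ x) := by
          rw [mulVec_mulVec, hy, dotProduct_smul, smul_eq_mul, dotProduct_comm]
  calc s * (y ⬝ᵥ x) = y ⬝ᵥ Aᵀ *ᵥ (A *ᵥ x + b • X) := by
        rw [hx, dotProduct_smul, smul_eq_mul]
    _ = A *ᵥ y ⬝ᵥ A *ᵥ x + b * (A *ᵥ y ⬝ᵥ X) := by
        rw [dotProduct_mulVec, vecMul_transpose, dotProduct_add, dotProduct_smul, smul_eq_mul]
    _ = t * (y ⬝ᵥ x) + b * c * (w ⬝ᵥ X) := by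
        rw [hgram, hw, smul_dotProduct, smul_eq_mul, mul_assoc]

end Matrix

theorem abs_dotProduct_le_one {ι : Type*} [Fintype ι] {x y : ι → ℝ} (hx : ∑ i, x i ^ 2 = 1)
    (hy : ∑ i, y i ^ 2 ≤ 1) : |x ⬝ᵥ y| ≤ 1 := by
  rw [← sq_le_one_iff_abs_le_one]
  calc (x ⬝ᵥ y) ^ 2 ≤ (∑ i, x i ^ 2) * ∑ i, y i ^ 2 := Finset.sum_mul_sq_le_sq_mul_sq _ x y
    _ ≤ 1 := by rw [hx, one_mul]; exact hy

theorem sum_sq_comp_castSucc_le {p : ℕ} (u : Fin (p + 1) → ℝ) :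
    ∑ j, (u ∘ Fin.castSucc) j ^ 2 ≤ ∑ j, u j ^ 2 := by
  rw [Fin.sum_univ_castSucc (fun j => u j ^ 2)]
  exact le_add_of_nonneg_right (sq_nonneg _)

/-- Singular-vector perturbation inequality for deleting the last column: if `u = (u', b)`
is a unit right singular vector of `M` for the singular value `σ`, and `(uhat, what)` is a unit
right/left singular pair of `M'` (the matrix `M` without its last column `X`) for the
singular value `σ' > 0`, and `b ≠ 0`, then `|whatᵀX| ≤ |σ'² - σ²| / (|b| σ')`. -/
theorem deleted_column_singular_bound (n p : ℕ)
    (M : Matrix (Fin n) (Fin (p + 1)) ℝ)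
    (M' : Matrix (Fin n) (Fin p) ℝ) (hM' : M' = M.submatrix id Fin.castSucc)
    (σ σ' : ℝ) (hσ' : 0 < σ')
    (u : Fin (p + 1) → ℝ)
    (hu_unit : ∑ t, u t ^ 2 = 1)
    (hu : (Mᵀ * M).mulVec u = σ ^ 2 • u)
    (hb : u (Fin.last p) ≠ 0)
    (uhat : Fin p → ℝ) (what : Fin n → ℝ)     (huhat_unit : ∑ t, uhat t ^ 2 = 1)
    (huhat : (M'ᵀ * M').mulVec uhat = σ' ^ 2 • uhat)
    (hpair : M'.mulVec uhat = σ' • what) :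
    |∑ i, what i * M i (Fin.last p)| ≤ |σ' ^ 2 - σ ^ 2| / (|u (Fin.last p)| * σ') := by
  subst hM'
  have hu' : (M.submatrix id Fin.castSucc)ᵀ *ᵥ (M.submatrix id Fin.castSucc *ᵥ (u ∘ Fin.castSucc)
      + u (Fin.last p) • fun i => M i (Fin.last p)) = σ ^ 2 • (u ∘ Fin.castSucc) := by
    rw [← mulVec_eq_submatrix_castSucc_mulVec_add, transpose_submatrix_castSucc_mulVec,
      mulVec_mulVec, hu]
    rfl
  have hgap := sub_mul_dotProduct_eq_of_transpose_mulVec_add hu' huhat hpair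
  have hS := abs_dotProduct_le_one huhat_unit (hu_unit ▸ sum_sq_comp_castSucc_le u)
  have habs : |u (Fin.last p)| * σ' * |∑ i, what i * M i (Fin.last p)|
      = |σ' ^ 2 - σ ^ 2| * |uhat ⬝ᵥ (u ∘ Fin.castSucc)| := by
    rw [abs_sub_comm, ← abs_mul, hgap, abs_mul, abs_mul, abs_of_pos hσ']
    rfl
  rw [le_div_iff₀ (mul_pos (abs_pos.mpr hb) hσ'), mul_comm, habs]
  exact mul_le_of_le_one_right (abs_nonneg _) hS
end

section
/- Let u be a unit vector in ℝᵖ that is (c₀,c₁)-incompressible, i.e., its Euclidean distance to every vector supported on at most ⌊c₀p⌋ coordinates is greater than c₁. Then at least ⌈c₀c₁²p/2⌉ coordinates j of u satisfy c₁/√(2p) ≤ |u_j| ≤ 1/√(c₀p). -/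
/-!
Incompressibility caps the mass of the large coordinates: by Markov's inequality at most
`c₀ p` coordinates exceed `1/√(c₀ p)` in absolute value, so zeroing them out gives a
`c₀`-sparse vector, which must be at distance `> c₁` from `u`. Hence the coordinates with
`|u j| ≤ 1/√(c₀ p)` carry mass `> c₁²`. Those below `c₁/√(2p)` carry at most `c₁²/2`, so the
intermediate ones carry more than `c₁²/2`, each at most `1/(c₀ p)`: there are more than
`c₀ c₁² p / 2` of them.
-/

open Finset

section SpreadCoordinates

variable {ι : Type*} (u : ι → ℝ)

theorem card_mul_sq_le_sum_sq {s : Finset ι} {a : ℝ} (ha : 0 ≤ a) (h : ∀ j ∈ s, a ≤ |u j|) :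
    #s * a ^ 2 ≤ ∑ j ∈ s, u j ^ 2 := by
  simpa using card_nsmul_le_sum s (fun j => u j ^ 2) (a ^ 2) fun j hj =>
    sq_abs (u j) ▸ pow_le_pow_left₀ ha (h j hj) 2

theorem sum_sq_le_card_mul_sq {s : Finset ι} {a : ℝ} (h : ∀ j ∈ s, |u j| ≤ a) :
    ∑ j ∈ s, u j ^ 2 ≤ #s * a ^ 2 := by
  simpa using sum_le_card_nsmul s (fun j => u j ^ 2) (a ^ 2) fun j hj =>
    sq_abs (u j) ▸ pow_le_pow_left₀ (abs_nonneg _) (h j hj) 2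

variable [Fintype ι]

theorem card_filter_lt_abs_mul_sq_le {a : ℝ} (ha : 0 ≤ a) :
    #{j | a < |u j|} * a ^ 2 ≤ ∑ j, u j ^ 2 :=
  (card_mul_sq_le_sum_sq u ha fun _ hj => (mem_filter.1 hj).2.le).trans <|
    sum_le_sum_of_subset_of_nonneg (subset_univ _) fun j _ _ => sq_nonneg (u j)

theorem sq_lt_sum_sq_filter_abs_le {k : ℕ} {a c : ℝ} (hc : 0 ≤ c)
    (hfar : ∀ x : ι → ℝ, #{t | x t ≠ 0} ≤ k → √(∑ t, (u t - x t) ^ 2) > c)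
    (hlarge : #{j | a < |u j|} ≤ k) :
    c ^ 2 < ∑ j with |u j| ≤ a, u j ^ 2 := by
  set x : ι → ℝ := fun j => if a < |u j| then u j else 0
  have hsparse : #{t | x t ≠ 0} ≤ k := by
    refine (card_le_card fun t ht => ?_).trans hlarge
    simp only [mem_filter, mem_univ, true_and, x] at ht ⊢
    by_contra h
    exact ht (if_neg h)
  have hresidual : ∑ t, (u t - x t) ^ 2 = ∑ j with |u j| ≤ a, u j ^ 2 := by
    rw [sum_filter]
    refine sum_congr rfl fun t _ => ?_
    by_cases h : a < |u t| <;> simp [x, h, not_le.2, le_of_not_gt]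
  rw [← hresidual, ← Real.lt_sqrt hc]
  exact hfar x hsparse

theorem sum_sq_filter_abs_le_le (a b : ℝ) :
    ∑ j with |u j| ≤ a, u j ^ 2 ≤
      #{j | b ≤ |u j| ∧ |u j| ≤ a} * a ^ 2 + Fintype.card ι * b ^ 2 := by
  have hmedium : univ.filter (fun j => b ≤ |u j| ∧ |u j| ≤ a) =
      (univ.filter fun j => |u j| ≤ a).filter fun j => b ≤ |u j| := by
    rw [filter_filter]
    exact filter_congr fun j _ => and_comm
  rw [← sum_filter_add_sum_filter_not _ (fun j => b ≤ |u j|), hmedium]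
  gcongr
  · exact sum_sq_le_card_mul_sq u fun j hj => (mem_filter.1 (mem_filter.1 hj).1).2
  · calc ∑ j ∈ {j ∈ {j | |u j| ≤ a} | ¬b ≤ |u j|}, u j ^ 2
        ≤ #{j ∈ {j | |u j| ≤ a} | ¬b ≤ |u j|} * b ^ 2 :=
          sum_sq_le_card_mul_sq u fun j hj => (not_le.1 (mem_filter.1 hj).2).le
      _ ≤ Fintype.card ι * b ^ 2 := by gcongr; exact card_le_univ _

end SpreadCoordinates

/-- Spread coordinates of incompressible vectors: if a unit vector `u ∈ ℝᵖ` has distance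
`> c₁` to every `⌊c₀ p⌋`-sparse vector, then at least `⌈c₀ c₁² p / 2⌉` coordinates `j`
satisfy `c₁/√(2p) ≤ |u j| ≤ 1/√(c₀ p)`. -/
theorem incompressible_spread (p : ℕ) (c₀ c₁ : ℝ)
    (hc₀ : c₀ ∈ Set.Ioo (0 : ℝ) 1) (hc₁ : c₁ ∈ Set.Ioo (0 : ℝ) 1)
    (u : Fin p → ℝ) (hu : ∑ t, u t ^ 2 = 1)
    (hincomp : ∀ x : Fin p → ℝ,
      (Finset.univ.filter fun t => x t ≠ 0).card ≤ ⌊c₀ * p⌋₊ →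
      Real.sqrt (∑ t, (u t - x t) ^ 2) > c₁) :
    ⌈c₀ * c₁ ^ 2 * p / 2⌉₊ ≤
      (Finset.univ.filter fun j =>
        c₁ / Real.sqrt (2 * p) ≤ |u j| ∧ |u j| ≤ 1 / Real.sqrt (c₀ * p)).card := by
  rcases Nat.eq_zero_or_pos p with rfl | hp
  · simp at hu
  have hc₀p : 0 < c₀ * p := mul_pos hc₀.1 (Nat.cast_pos.2 hp)
  set a := 1 / √(c₀ * p)
  set b := c₁ / √(2 * p)
  have ha : a ^ 2 = 1 / (c₀ * p) := by rw [div_pow, one_pow, Real.sq_sqrt hc₀p.le]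
  have hb : b ^ 2 = c₁ ^ 2 / (2 * p) := by rw [div_pow, Real.sq_sqrt (by positivity)]
  have hlarge : #{j | a < |u j|} ≤ ⌊c₀ * p⌋₊ := by
    have := card_filter_lt_abs_mul_sq_le u (by positivity : 0 ≤ a)
    rw [ha, hu, mul_one_div, div_le_one hc₀p] at this
    exact Nat.le_floor this
  have hmass := (sq_lt_sum_sq_filter_abs_le u hc₁.1.le hincomp hlarge).trans_le
    (sum_sq_filter_abs_le_le u a b)
  rw [ha, hb, Fintype.card_fin] at hmass
  refine Nat.ceil_le.2 ?_
  have : c₁ ^ 2 / 2 < #{j | b ≤ |u j| ∧ |u j| ≤ a} / (c₀ * p) := by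
    field_simp at hmass ⊢
    linarith
  rw [lt_div_iff₀ hc₀p] at this
  linarith
end
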